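/- arXiv:2103.00181 — 8 statements merged into one kernel-verified Lean document; each statement's English description precedes it below -/
import Mathlib

section
/- Let λ > 0 and μ > 0 with λ/μ ≤ 1, and let x : [0,∞) → ℝ be a differentiable function satisfying ẋ(t) = λ(1 − x(t))x(t) − μx(t) for all t ≥ 0 with x(0) ∈ [0,1]. Then x(t) → 0 as t → ∞; that is, below the epidemic threshold the disease-free equilibrium x = 0 is globally asymptotically stable on [0,1]. -/
open Filter Topology

/-- Below the epidemic threshold (`λ/μ ≤ 1`) the disease-free equilibrium `x = 0`
of the population SIS model is globally asymptotically stable on `[0,1]`. -/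
theorem population_sis_below_threshold (lam mu : ℝ) (hlam : 0 < lam) (hmu : 0 < mu)
    (hthr : lam / mu ≤ 1)
    (x : ℝ → ℝ)
    (hx : ∀ t : ℝ, 0 ≤ t →
      HasDerivAt x (lam * (1 - x t) * x t - mu * x t) t)
    (h0 : x 0 ∈ Set.Icc (0 : ℝ) 1) :
    Tendsto x atTop (nhds 0) := by
  have hml : lam ≤ mu := by
    rw [div_le_one hmu] at hthr; exact hthr
  -- continuity of x on [0,∞)
  have hcx : ContinuousOn x (Set.Ici 0) := fun t ht =>
    (hx t ht).continuousAt.continuousWithinAt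
  -- continuous extension x (max t 0)
  have hxt : Continuous (fun t : ℝ => x (max t 0)) := by
    apply hcx.comp_continuous (continuous_id.max continuous_const)
    intro t; exact Set.mem_Ici.2 (le_max_right _ _)
  -- g : growth rate function, continuous
  set g : ℝ → ℝ := fun s => lam * (1 - x (max s 0)) - mu with hg_def
  have hgc : Continuous g := (continuous_const.mul (continuous_const.sub hxt)).sub continuous_const
  set G : ℝ → ℝ := fun t => ∫ s in (0:ℝ)..t, g s with hG_def
  have hG : ∀ t : ℝ, HasDerivAt G (g t) t := fun t =>
    (hgc.integral_hasStrictDerivAt 0 t).hasDerivAt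
  -- u = x * exp(-G) has zero derivative on [0,∞)
  have hu : ∀ t : ℝ, 0 ≤ t → HasDerivAt (fun s => x s * Real.exp (-G s)) 0 t := by
    intro t ht
    have h1 := (hx t ht).mul ((hG t).neg.exp)
    have hxg : lam * (1 - x t) * x t - mu * x t = g t * x t := by
      simp only [hg_def, max_eq_left ht]; ring
    rw [hxg] at h1
    refine h1.congr_deriv ?_
    ring
  have hconst : ∀ t : ℝ, 0 ≤ t → x t * Real.exp (-G t) = x 0 := by
    intro t ht
    have h2 := constant_of_has_deriv_right_zero
      (f := fun s => x s * Real.exp (-G s)) (a := 0) (b := t)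
      (fun s hs => (hu s hs.1).continuousAt.continuousWithinAt)
      (fun s hs => (hu s hs.1).hasDerivWithinAt)
      t ⟨ht, le_refl t⟩
    simpa [hG_def, intervalIntegral.integral_same] using h2
  -- nonnegativity
  have hpos : ∀ t : ℝ, 0 ≤ t → 0 ≤ x t := by
    intro t ht
    have h2 := hconst t ht
    nlinarith [Real.exp_pos (-G t), h0.1]
  -- upper bound: v = (1-x) * exp(H) is monotone
  set h : ℝ → ℝ := fun s => lam * x (max s 0) with hh_def
  have hhc : Continuous h := continuous_const.mul hxt
  set H : ℝ → ℝ := fun t => ∫ s in (0:ℝ)..t, h s with hH_def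
  have hH : ∀ t : ℝ, HasDerivAt H (h t) t := fun t =>
    (hhc.integral_hasStrictDerivAt 0 t).hasDerivAt
  have hv : ∀ t : ℝ, 0 ≤ t →
      HasDerivAt (fun s => (1 - x s) * Real.exp (H s)) (mu * x t * Real.exp (H t)) t := by
    intro t ht
    have h1 := ((hasDerivAt_const t (1:ℝ)).sub (hx t ht)).mul ((hH t).exp)
    refine h1.congr_deriv ?_
    simp only [hh_def, max_eq_left ht, Pi.sub_apply]
    ring
  have hub : ∀ t : ℝ, 0 ≤ t → x t ≤ 1 := by
    intro t ht
    have hmono : MonotoneOn (fun s => (1 - x s) * Real.exp (H s)) (Set.Ici 0) := by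
      apply monotoneOn_of_deriv_nonneg (convex_Ici 0)
      · exact fun s hs => (hv s hs).continuousAt.continuousWithinAt
      · intro s hs
        rw [interior_Ici] at hs
        exact (hv s (le_of_lt hs)).differentiableAt.differentiableWithinAt
      · intro s hs
        rw [interior_Ici] at hs
        rw [(hv s (le_of_lt hs)).deriv]
        exact mul_nonneg (mul_nonneg hmu.le (hpos s (le_of_lt hs))) (Real.exp_pos _).le
    have h2 := hmono (Set.self_mem_Ici) (Set.mem_Ici.2 ht) ht
    have hH0 : H 0 = 0 := intervalIntegral.integral_same
    simp only [hH0, Real.exp_zero, mul_one] at h2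
    nlinarith [Real.exp_pos (H t), h0.2]
  -- x is antitone on [0,∞)
  have hant : AntitoneOn x (Set.Ici 0) := by
    apply antitoneOn_of_deriv_nonpos (convex_Ici 0) hcx
    · intro s hs
      rw [interior_Ici] at hs
      exact (hx s (le_of_lt hs)).differentiableAt.differentiableWithinAt
    · intro s hs
      rw [interior_Ici] at hs
      rw [(hx s (le_of_lt hs)).deriv]
      nlinarith [mul_nonneg (sub_nonneg.2 hml) (hpos s (le_of_lt hs)),
        mul_nonneg hlam.le (mul_nonneg (hpos s (le_of_lt hs)) (hpos s (le_of_lt hs)))]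
  -- limit via the extension y
  set y : ℝ → ℝ := fun t => x (max t 0) with hy_def
  have hyant : Antitone y := fun s t hst =>
    hant (Set.mem_Ici.2 (le_max_right s 0)) (Set.mem_Ici.2 (le_max_right t 0))
      (max_le_max hst le_rfl)
  have hybdd : BddBelow (Set.range y) := by
    refine ⟨0, ?_⟩
    rintro _ ⟨t, rfl⟩
    exact hpos _ (le_max_right t 0)
  have hylim : Tendsto y atTop (nhds (⨅ t, y t)) := tendsto_atTop_ciInf hyant hybdd
  set L : ℝ := ⨅ t, y t with hL_def
  have hL0 : 0 ≤ L := le_ciInf fun t => hpos _ (le_max_right t 0)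
  have hLle : ∀ t : ℝ, L ≤ y t := fun t => ciInf_le hybdd t
  have hLz : L = 0 := by
    by_contra hne
    have hLpos : 0 < L := lt_of_le_of_ne hL0 (Ne.symm hne)
    -- w = x + lam*L^2*t is antitone on [0,∞)
    have hw : ∀ t : ℝ, 0 ≤ t →
        HasDerivAt (fun s => x s + lam * L ^ 2 * s)
          ((lam * (1 - x t) * x t - mu * x t) + lam * L ^ 2) t := by
      intro t ht
      have h1 := (hx t ht).add ((hasDerivAt_id t).const_mul (lam * L ^ 2))
      exact h1.congr_deriv (by ring)
    have hwant : AntitoneOn (fun s => x s + lam * L ^ 2 * s) (Set.Ici 0) := by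
      apply antitoneOn_of_deriv_nonpos (convex_Ici 0)
      · exact fun s hs => (hw s hs).continuousAt.continuousWithinAt
      · intro s hs
        rw [interior_Ici] at hs
        exact (hw s (le_of_lt hs)).differentiableAt.differentiableWithinAt
      · intro s hs
        rw [interior_Ici] at hs
        rw [(hw s (le_of_lt hs)).deriv]
        have hxL : L ≤ x s := by
          simpa only [hy_def, max_eq_left (le_of_lt (Set.mem_Ioi.1 hs))] using hLle s
        nlinarith [mul_nonneg (sub_nonneg.2 hml) (hpos s (le_of_lt hs)),
          mul_nonneg (mul_nonneg hlam.le (sub_nonneg.2 hxL))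
            (by linarith [hpos s (le_of_lt hs)] : (0:ℝ) ≤ x s + L)]
    set T : ℝ := 2 / (lam * L ^ 2) with hT_def
    have hTpos : 0 < T := by positivity
    have h3 := hwant Set.self_mem_Ici (Set.mem_Ici.2 hTpos.le) hTpos.le
    have hTT : lam * L ^ 2 * T = 2 := by
      rw [hT_def]; field_simp
    have hxT : L ≤ x T := by
      simpa only [hy_def, max_eq_left hTpos.le] using hLle T
    simp only [mul_zero, add_zero] at h3
    rw [hTT] at h3
    nlinarith [h0.2]
  rw [hLz] at hylim
  apply hylim.congr'
  filter_upwards [eventually_ge_atTop (0:ℝ)] with t ht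
  rw [hy_def]; simp [max_eq_left ht]
end

section
/- Let λ > 0 and μ > 0 with λ·s(0)/μ < 1, and let s, x, r : [0,∞) → ℝ be differentiable functions satisfying ṡ(t) = −λs(t)x(t), ẋ(t) = λs(t)x(t) − μx(t), ṙ(t) = μx(t) for all t ≥ 0, with s(0), x(0), r(0) ≥ 0 and s(0) + x(0) + r(0) = 1. Then the fraction of infected individuals decays exponentially: x(t) ≤ x(0)·e^{(λs(0) − μ)t} for all t ≥ 0, and in particular x(t) → 0 as t → ∞. -/
open Filter Topology intervalIntegral

/-- Solution formula for a scalar linear ODE `f' = g·f` on `[0,∞)`. -/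
lemma linear_ode_formula (f g : ℝ → ℝ) (hg : Continuous g)
    (hf : ∀ t : ℝ, 0 ≤ t → HasDerivAt f (g t * f t) t) :
    ∀ T : ℝ, 0 ≤ T → f T = f 0 * Real.exp (∫ u in (0:ℝ)..T, g u) := by
  intro T hT
  set A : ℝ → ℝ := fun u => ∫ v in (0:ℝ)..u, g v with hA
  have hAderiv : ∀ b : ℝ, HasDerivAt A (g b) b := fun b =>
    integral_hasDerivAt_right (hg.intervalIntegrable 0 b)
      (hg.stronglyMeasurableAtFilter _ _) hg.continuousAt
  set F : ℝ → ℝ := fun u => f u * Real.exp (-A u) with hF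
  have hFderiv : ∀ t : ℝ, 0 ≤ t → HasDerivAt F 0 t := by
    intro t ht
    have h1 : HasDerivAt (fun u => Real.exp (-A u)) (-g t * Real.exp (-A t)) t := by
      simpa [mul_comm] using (((hAderiv t).neg).exp)
    have : HasDerivAt (fun u => f u * Real.exp (-A u))
        (g t * f t * Real.exp (-A t) + f t * (-g t * Real.exp (-A t))) t := (hf t ht).mul h1
    convert this using 1
    ring
  have hFcont : ContinuousOn F (Set.Icc 0 T) := by
    intro t ht
    exact ((hf t ht.1).continuousAt.mul
      (Real.continuous_exp.continuousAt.comp ((hAderiv t).continuousAt.neg))).continuousWithinAt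
  have hconst := constant_of_has_deriv_right_zero hFcont
    (fun t ht => (hFderiv t ht.1).hasDerivWithinAt) T (Set.mem_Icc.2 ⟨hT, le_rfl⟩)
  have hA0 : A 0 = 0 := by simp [hA]
  have hF0 : F 0 = f 0 := by simp [hF, hA0]
  have : f T * Real.exp (-A T) = f 0 := by rw [← hF0]; exact hconst
  simp only [hA] at this
  calc f T = f T * Real.exp (-(∫ v in (0:ℝ)..T, g v)) * Real.exp (∫ v in (0:ℝ)..T, g v) := by
        rw [mul_assoc, ← Real.exp_add]; simp
    _ = f 0 * Real.exp (∫ u in (0:ℝ)..T, g u) := by rw [this]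

/-- Below the epidemic threshold (`λ·s(0)/μ < 1`) the fraction of infected
individuals in the population SIR model decays exponentially:
`x(t) ≤ x(0)·e^{(λs(0) − μ)t}`, and in particular `x(t) → 0`. -/
theorem population_sir_below_threshold (lam mu : ℝ) (hlam : 0 < lam) (hmu : 0 < mu)
    (s x r : ℝ → ℝ)
    (hthr : lam * s 0 / mu < 1)
    (hs : ∀ t : ℝ, 0 ≤ t → HasDerivAt s (-(lam * s t * x t)) t)
    (hx : ∀ t : ℝ, 0 ≤ t → HasDerivAt x (lam * s t * x t - mu * x t) t)
    (hr : ∀ t : ℝ, 0 ≤ t → HasDerivAt r (mu * x t) t)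
    (hs0 : 0 ≤ s 0) (hx0 : 0 ≤ x 0) (hr0 : 0 ≤ r 0)
    (hsum : s 0 + x 0 + r 0 = 1) :
    (∀ t : ℝ, 0 ≤ t → x t ≤ x 0 * Real.exp ((lam * s 0 - mu) * t)) ∧
    Tendsto x atTop (nhds 0) := by
  -- continuity of s and x on [0,∞), transferred to all of ℝ via `max · 0`
  have hmax : Continuous fun t : ℝ => max t 0 := continuous_id.max continuous_const
  have hscont : Continuous fun t : ℝ => s (max t 0) := by
    rw [continuous_iff_continuousAt]
    intro t
    exact ContinuousAt.comp (hs _ (le_max_right t 0)).continuousAt hmax.continuousAt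
  have hxcont : Continuous fun t : ℝ => x (max t 0) := by
    rw [continuous_iff_continuousAt]
    intro t
    exact ContinuousAt.comp (hx _ (le_max_right t 0)).continuousAt hmax.continuousAt
  -- solution formula for x
  set gx : ℝ → ℝ := fun t => lam * s (max t 0) - mu with hgx
  have hgxc : Continuous gx := ((continuous_const.mul hscont).sub continuous_const)
  have hxform := linear_ode_formula x gx hgxc (by
    intro t ht
    have := hx t ht
    convert this using 1
    simp [hgx, max_eq_left ht]
    ring)
  -- solution formula for s
  set gs : ℝ → ℝ := fun t => -(lam * x (max t 0)) with hgs
  have hgsc : Continuous gs := (continuous_const.mul hxcont).neg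
  have hsform := linear_ode_formula s gs hgsc (by
    intro t ht
    have := hs t ht
    convert this using 1
    simp [hgs, max_eq_left ht]
    ring)
  -- x is nonnegative on [0,∞)
  have hxnn : ∀ t : ℝ, 0 ≤ t → 0 ≤ x t := fun t ht => by
    rw [hxform t ht]; exact mul_nonneg hx0 (Real.exp_pos _).le
  -- s t ≤ s 0 on [0,∞)
  have hsle : ∀ t : ℝ, 0 ≤ t → s t ≤ s 0 := by
    intro t ht
    rw [hsform t ht]
    have hint : (∫ u in (0:ℝ)..t, gs u) ≤ 0 := by
      have heq : (∫ u in (0:ℝ)..t, gs u) = -∫ u in (0:ℝ)..t, lam * x (max u 0) := by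
        simp [hgs, integral_neg]
      rw [heq, neg_nonpos]
      exact integral_nonneg ht fun u _ => mul_nonneg hlam.le (hxnn _ (le_max_right u 0))
    calc s 0 * Real.exp (∫ u in (0:ℝ)..t, gs u) ≤ s 0 * 1 :=
          mul_le_mul_of_nonneg_left (Real.exp_le_one_iff.2 hint) hs0
      _ = s 0 := mul_one _
  -- the exponential bound
  have hbound : ∀ t : ℝ, 0 ≤ t → x t ≤ x 0 * Real.exp ((lam * s 0 - mu) * t) := by
    intro t ht
    rw [hxform t ht]
    have hint : (∫ u in (0:ℝ)..t, gx u) ≤ (lam * s 0 - mu) * t := by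
      have h1 : (∫ u in (0:ℝ)..t, gx u) ≤ ∫ _u in (0:ℝ)..t, (lam * s 0 - mu) := by
        apply integral_mono_on ht
          (hgxc.intervalIntegrable 0 t) (intervalIntegrable_const)
        intro u hu
        have : s (max u 0) ≤ s 0 := hsle _ (le_max_right u 0)
        simp only [hgx]
        nlinarith
      have h2 : (∫ _u in (0:ℝ)..t, (lam * s 0 - mu)) = (lam * s 0 - mu) * t := by
        simp
        ring
      linarith
    exact mul_le_mul_of_nonneg_left (Real.exp_le_exp.2 hint) hx0
  refine ⟨hbound, ?_⟩
  -- tendsto 0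
  have hc : lam * s 0 - mu < 0 := by
    have := (div_lt_one hmu).mp hthr
    linarith
  have h1 : Tendsto (fun t : ℝ => (lam * s 0 - mu) * t) atTop atBot :=
    (tendsto_const_mul_atBot_of_neg hc).mpr tendsto_id
  have h2 : Tendsto (fun t : ℝ => x 0 * Real.exp ((lam * s 0 - mu) * t)) atTop (nhds 0) := by
    have := (Real.tendsto_exp_atBot.comp h1).const_mul (x 0)
    simpa using this
  exact squeeze_zero' ((eventually_ge_atTop (0:ℝ)).mono fun t ht => hxnn t ht)
    ((eventually_ge_atTop (0:ℝ)).mono fun t ht => hbound t ht) h2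
end

section
/- Let λ > 0 and μ > 0, and let s, x, r : [0,∞) → ℝ be differentiable functions satisfying ṡ(t) = −λs(t)x(t), ẋ(t) = λs(t)x(t) − μx(t), ṙ(t) = μx(t) for all t ≥ 0, with s(0) > 0, x(0) > 0, r(0) ≥ 0, s(0) + x(0) + r(0) = 1, and λ·s(0)/μ > 1. Then x(t) > 0 for all t ≥ 0, and x is strictly increasing on any interval where λ·s(t) > μ and strictly decreasing on any interval where λ·s(t) < μ; consequently, any time t* at which x attains its maximum (the epidemic peak) satisfies s(t*) = μ/λ whenever there exists a time with λ·s(t) < μ. -/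
open Filter Topology

/-- Above the epidemic threshold (`λ·s(0)/μ > 1`) in the population SIR model:
`x(t) > 0` for all `t ≥ 0`; `x` is strictly increasing on any interval where
`λ·s(t) > μ` and strictly decreasing on any interval where `λ·s(t) < μ`;
consequently any time `t*` at which `x` attains its maximum satisfies
`s(t*) = μ/λ`, whenever there exists a time with `λ·s(t) < μ`. -/
theorem population_sir_epidemic_peak (lam mu : ℝ) (hlam : 0 < lam) (hmu : 0 < mu)
    (s x r : ℝ → ℝ)
    (hs : ∀ t : ℝ, 0 ≤ t → HasDerivAt s (-(lam * s t * x t)) t)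
    (hx : ∀ t : ℝ, 0 ≤ t → HasDerivAt x (lam * s t * x t - mu * x t) t)
    (hr : ∀ t : ℝ, 0 ≤ t → HasDerivAt r (mu * x t) t)
    (hs0 : 0 < s 0) (hx0 : 0 < x 0) (hr0 : 0 ≤ r 0)
    (hsum : s 0 + x 0 + r 0 = 1)
    (hthr : 1 < lam * s 0 / mu) :
    (∀ t : ℝ, 0 ≤ t → 0 < x t) ∧
    (∀ a b : ℝ, 0 ≤ a →
      (∀ t ∈ Set.Icc a b, mu < lam * s t) → StrictMonoOn x (Set.Icc a b)) ∧
    (∀ a b : ℝ, 0 ≤ a →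
      (∀ t ∈ Set.Icc a b, lam * s t < mu) → StrictAntiOn x (Set.Icc a b)) ∧
    (∀ tstar : ℝ, 0 ≤ tstar → (∀ t : ℝ, 0 ≤ t → x t ≤ x tstar) →
      (∃ t : ℝ, 0 ≤ t ∧ lam * s t < mu) → s tstar = mu / lam) := by
  -- continuity of s and x on [0, ∞)
  have hxc : ∀ t : ℝ, 0 ≤ t → ContinuousAt x t := fun t ht => (hx t ht).continuousAt
  have hsc : ∀ t : ℝ, 0 ≤ t → ContinuousAt s t := fun t ht => (hs t ht).continuousAt
  -- Part 1: positivity of x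
  have hpos : ∀ t : ℝ, 0 ≤ t → 0 < x t := by
    intro t ht
    by_contra hle
    push_neg at hle
    -- there is t₀ ∈ [0, t] with x t₀ = 0
    have ht0 : (0:ℝ) ≤ t := ht
    have hcont : ContinuousOn x (Set.Icc 0 t) := fun u hu =>
      (hxc u hu.1).continuousWithinAt
    obtain ⟨t₀, ht₀mem, ht₀⟩ : ∃ t₀ ∈ Set.Icc (0:ℝ) t, x t₀ = 0 := by
      have := intermediate_value_Icc' ht0 hcont
      have h0 : (0:ℝ) ∈ Set.Icc (x t) (x 0) := ⟨hle, le_of_lt hx0⟩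
      obtain ⟨c, hc, hc0⟩ := this h0
      exact ⟨c, hc, hc0⟩
    -- bound the coefficient on [0, t₀]
    have hscont : ContinuousOn (fun u => lam * s u - mu) (Set.Icc 0 t₀) := by
      apply ContinuousOn.sub _ continuousOn_const
      exact continuousOn_const.mul (fun u hu =>
        (hsc u hu.1).continuousWithinAt)
    obtain ⟨K, hK⟩ := (isCompact_Icc).exists_bound_of_continuousOn hscont
    have hK0 : 0 ≤ K := by
      have := hK 0 ⟨le_refl 0, ht₀mem.1⟩
      exact le_trans (norm_nonneg _) this
    -- Gronwall backwards from t₀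
    set f : ℝ → ℝ := fun τ => x (t₀ - τ) with hf
    have hfd : ∀ τ ∈ Set.Ico (0:ℝ) t₀, HasDerivWithinAt f
        (-(lam * s (t₀ - τ) * x (t₀ - τ) - mu * x (t₀ - τ))) (Set.Ici τ) τ := by
      intro τ hτ
      have hmem : 0 ≤ t₀ - τ := by linarith [hτ.2]
      have h1 : HasDerivAt (fun τ : ℝ => t₀ - τ) (-1) τ := by
        simpa using (hasDerivAt_id τ).const_sub t₀
      have h2 := (hx (t₀ - τ) hmem).comp τ h1
      have h3 := h2.hasDerivWithinAt (s := Set.Ici τ)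
      rw [show (lam * s (t₀ - τ) * x (t₀ - τ) - mu * x (t₀ - τ)) * -1
        = -(lam * s (t₀ - τ) * x (t₀ - τ) - mu * x (t₀ - τ)) by ring] at h3
      exact h3
    have hfc : ContinuousOn f (Set.Icc 0 t₀) := by
      intro τ hτ
      have hmem : 0 ≤ t₀ - τ := by linarith [hτ.2]
      exact ((hxc (t₀ - τ) hmem).comp
        ((continuous_const.sub continuous_id).continuousAt)).continuousWithinAt
    have hbound : ∀ τ ∈ Set.Ico (0:ℝ) t₀,
        ‖-(lam * s (t₀ - τ) * x (t₀ - τ) - mu * x (t₀ - τ))‖ ≤ K * ‖f τ‖ + 0 := by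
      intro τ hτ
      have hmem : t₀ - τ ∈ Set.Icc (0:ℝ) t₀ := ⟨by linarith [hτ.2], by linarith [hτ.1]⟩
      have h1 := hK _ hmem
      have : ‖-(lam * s (t₀ - τ) * x (t₀ - τ) - mu * x (t₀ - τ))‖
          = ‖lam * s (t₀ - τ) - mu‖ * ‖x (t₀ - τ)‖ := by
        rw [norm_neg, ← norm_mul]; ring_nf
      rw [this, add_zero]
      exact mul_le_mul_of_nonneg_right h1 (norm_nonneg _)
    have hf0 : ‖f 0‖ ≤ 0 := by simp [hf, ht₀]
    have := norm_le_gronwallBound_of_norm_deriv_right_le hfc hfd hf0 hbound t₀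
      ⟨ht₀mem.1, le_refl _⟩
    rw [gronwallBound_ε0_δ0] at this
    have hx00 : x 0 = 0 := by
      have h0 : ‖f t₀‖ ≤ 0 := this
      have : f t₀ = 0 := by
        have := norm_nonneg (f t₀); have := abs_nonneg (f t₀)
        simpa [Real.norm_eq_abs, abs_eq_zero] using le_antisymm h0 (norm_nonneg _)
      simpa [hf] using this
    linarith
  -- Part 2: strict monotonicity
  have hmono : ∀ a b : ℝ, 0 ≤ a →
      (∀ t ∈ Set.Icc a b, mu < lam * s t) → StrictMonoOn x (Set.Icc a b) := by
    intro a b ha hcond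
    apply strictMonoOn_of_deriv_pos (convex_Icc a b)
    · intro u hu
      exact (hxc u (le_trans ha hu.1)).continuousWithinAt
    · intro u hu
      rw [interior_Icc] at hu
      have hu0 : 0 ≤ u := le_trans ha (le_of_lt hu.1)
      rw [(hx u hu0).deriv]
      have h1 := hcond u ⟨le_of_lt hu.1, le_of_lt hu.2⟩
      have h2 := hpos u hu0
      nlinarith
  have hanti : ∀ a b : ℝ, 0 ≤ a →
      (∀ t ∈ Set.Icc a b, lam * s t < mu) → StrictAntiOn x (Set.Icc a b) := by
    intro a b ha hcond
    apply strictAntiOn_of_deriv_neg (convex_Icc a b)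
    · intro u hu
      exact (hxc u (le_trans ha hu.1)).continuousWithinAt
    · intro u hu
      rw [interior_Icc] at hu
      have hu0 : 0 ≤ u := le_trans ha (le_of_lt hu.1)
      rw [(hx u hu0).deriv]
      have h1 := hcond u ⟨le_of_lt hu.1, le_of_lt hu.2⟩
      have h2 := hpos u hu0
      nlinarith
  refine ⟨hpos, hmono, hanti, ?_⟩
  -- Part 4: the peak
  intro tstar htstar hmax _
  have hs0' : mu < lam * s 0 := by
    rw [lt_div_iff₀ hmu] at hthr; linarith
  rcases lt_trichotomy (lam * s tstar) mu with hlt | heq | hgt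
  · -- s decreasing before tstar; tstar > 0
    exfalso
    have htpos : 0 < tstar := by
      rcases eq_or_lt_of_le htstar with h | h
      · exfalso; rw [← h] at hlt; linarith
      · exact h
    have hct : ContinuousAt (fun u => lam * s u) tstar :=
      continuousAt_const.mul (hsc tstar htstar)
    have hev : ∀ᶠ u in 𝓝 tstar, lam * s u < mu := hct.eventually (eventually_lt_nhds hlt)
    obtain ⟨δ, hδ, hball⟩ := Metric.eventually_nhds_iff.mp hev
    set ε := min (δ / 2) tstar with hε
    have hε0 : 0 < ε := lt_min (by linarith) htpos
    have hεδ : ε ≤ δ / 2 := min_le_left _ _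
    have hεt : ε ≤ tstar := min_le_right _ _
    have ha0 : 0 ≤ tstar - ε := by linarith
    have hA := hanti (tstar - ε) tstar ha0 ?_
    · have := hA ⟨le_refl _, by linarith⟩ ⟨by linarith, le_refl _⟩ (by linarith)
      have := hmax (tstar - ε) ha0
      linarith
    · intro u hu
      apply hball
      rw [Real.dist_eq, abs_lt]
      constructor <;> [skip; skip] <;>
        · have := hu.1; have := hu.2; linarith
  · field_simp
    linarith
  · -- s increasing after tstar: contradiction
    exfalso
    have hct : ContinuousAt (fun u => lam * s u) tstar :=
      continuousAt_const.mul (hsc tstar htstar)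
    have hev : ∀ᶠ u in 𝓝 tstar, mu < lam * s u := hct.eventually (eventually_gt_nhds hgt)
    obtain ⟨δ, hδ, hball⟩ := Metric.eventually_nhds_iff.mp hev
    have hM := hmono tstar (tstar + δ / 2) htstar ?_
    · have := hM ⟨le_refl _, by linarith⟩ ⟨by linarith, le_refl _⟩ (by linarith)
      have := hmax (tstar + δ / 2) (by linarith)
      linarith
    · intro u hu
      apply hball
      rw [Real.dist_eq, abs_lt]
      constructor <;>
        · have := hu.1; have := hu.2; linarith
end

section
/- Let λ > 0 and μ > 0, and let s, x, r : [0,∞) → ℝ be differentiable functions satisfying ṡ(t) = −λs(t)x(t), ẋ(t) = λs(t)x(t) − μx(t), ṙ(t) = μx(t) for all t ≥ 0, with s(0) > 0, x(0) ≥ 0, r(0) ≥ 0 and s(0) + x(0) + r(0) = 1. Then x(t) → 0 as t → ∞, s(t) converges to a limit s_∞ as t → ∞, and the limiting fraction of susceptibles is strictly positive: s_∞ ≥ s(0)·e^{−λ/μ} > 0. -/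
open Filter Topology Set

lemma sir_const_of_deriv_zero (f : ℝ → ℝ)
    (hf : ∀ t, 0 ≤ t → HasDerivAt f 0 t) : ∀ t, 0 ≤ t → f t = f 0 := by
  intro t ht
  exact constant_of_has_deriv_right_zero
    (fun u hu => (hf u hu.1).continuousAt.continuousWithinAt)
    (fun u hu => (hf u hu.1).hasDerivWithinAt) t ⟨ht, le_rfl⟩

lemma sir_mono_of_deriv_nonneg (f g : ℝ → ℝ) (a : ℝ)
    (hf : ∀ t, a ≤ t → HasDerivAt f (g t) t) (hg : ∀ t, a ≤ t → 0 ≤ g t) :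
    MonotoneOn f (Set.Ici a) := by
  apply monotoneOn_of_deriv_nonneg (convex_Ici a)
    (fun u hu => (hf u hu).continuousAt.continuousWithinAt)
  · intro u hu
    rw [interior_Ici] at hu
    exact ((hf u hu.le).differentiableAt).differentiableWithinAt
  · intro u hu
    rw [interior_Ici] at hu
    rw [(hf u hu.le).deriv]
    exact hg u hu.le

lemma sir_integral_hasDerivAt (c : ℝ → ℝ) (hc : Continuous c) (t : ℝ) :
    HasDerivAt (fun u => ∫ v in (0:ℝ)..u, c v) (c t) t :=
  intervalIntegral.integral_hasDerivAt_right (hc.intervalIntegrable 0 t)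
    (hc.stronglyMeasurable.stronglyMeasurableAtFilter) hc.continuousAt

lemma sir_linear_ode (f c : ℝ → ℝ) (hc : Continuous c)
    (hf : ∀ t, 0 ≤ t → HasDerivAt f (c t * f t) t) :
    ∀ t, 0 ≤ t → f t = f 0 * Real.exp (∫ v in (0:ℝ)..t, c v) := by
  set C : ℝ → ℝ := fun u => ∫ v in (0:ℝ)..u, c v with hCdef
  have hCd : ∀ u, HasDerivAt C (c u) u := sir_integral_hasDerivAt c hc
  have key : ∀ t, 0 ≤ t → f t * Real.exp (-(C t)) = f 0 * Real.exp (-(C 0)) := by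
    apply sir_const_of_deriv_zero
    intro t ht
    have h1 : HasDerivAt (fun u => f u * Real.exp (-(C u)))
        (c t * f t * Real.exp (-(C t)) + f t * (Real.exp (-(C t)) * -(c t))) t :=
      (hf t ht).mul ((hCd t).neg.exp)
    convert h1 using 1
    ring
  intro t ht
  have h := key t ht
  have h0 : C 0 = 0 := intervalIntegral.integral_same
  rw [h0, neg_zero, Real.exp_zero, mul_one, Real.exp_neg] at h
  have he : Real.exp (C t) ≠ 0 := Real.exp_ne_zero _
  field_simp at h
  rw [h]; exact mul_comm _ _

/-- In the population SIR model with `s(0) > 0`: the infected fraction tends to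
zero, the susceptible fraction converges to a limit `s_∞`, and this limit is
strictly positive, with `s_∞ ≥ s(0)·e^{−λ/μ} > 0`. -/
theorem population_sir_limit_susceptibles (lam mu : ℝ) (hlam : 0 < lam) (hmu : 0 < mu)
    (s x r : ℝ → ℝ)
    (hs : ∀ t : ℝ, 0 ≤ t → HasDerivAt s (-(lam * s t * x t)) t)
    (hx : ∀ t : ℝ, 0 ≤ t → HasDerivAt x (lam * s t * x t - mu * x t) t)
    (hr : ∀ t : ℝ, 0 ≤ t → HasDerivAt r (mu * x t) t)
    (hs0 : 0 < s 0) (hx0 : 0 ≤ x 0) (hr0 : 0 ≤ r 0)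
    (hsum : s 0 + x 0 + r 0 = 1) :
    Tendsto x atTop (nhds 0) ∧
    ∃ sinf : ℝ, Tendsto s atTop (nhds sinf) ∧
      s 0 * Real.exp (-(lam / mu)) ≤ sinf ∧ 0 < sinf := by
  -- continuity of s and x on the right half line, extended continuously
  have hscont : Continuous (fun t => s (max t 0)) := by
    rw [continuous_iff_continuousAt]
    intro t
    show ContinuousAt (s ∘ fun u : ℝ => max u 0) t
    refine ContinuousAt.comp ?_ ?_
    · exact (hs (max t 0) (le_max_right _ _)).continuousAt
    · exact (continuous_id.max continuous_const).continuousAt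
  have hxcont : Continuous (fun t => x (max t 0)) := by
    rw [continuous_iff_continuousAt]
    intro t
    show ContinuousAt (x ∘ fun u : ℝ => max u 0) t
    refine ContinuousAt.comp ?_ ?_
    · exact (hx (max t 0) (le_max_right _ _)).continuousAt
    · exact (continuous_id.max continuous_const).continuousAt
  -- x is nonnegative
  have hxnn : ∀ t, 0 ≤ t → 0 ≤ x t := by
    intro t ht
    have := sir_linear_ode x (fun u => lam * s (max u 0) - mu)
      ((continuous_const.mul hscont).sub continuous_const)
      (by
        intro u hu
        have h := hx u hu
        have hm : max u 0 = u := max_eq_left hu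
        show HasDerivAt x ((lam * s (max u 0) - mu) * x u) u
        rw [hm]
        convert h using 1
        ring) t ht
    rw [this]
    exact mul_nonneg hx0 (Real.exp_pos _).le
  -- s is positive
  have hspos : ∀ t, 0 ≤ t → 0 < s t := by
    intro t ht
    have := sir_linear_ode s (fun u => -(lam * x (max u 0)))
      ((continuous_const.mul hxcont).neg)
      (by
        intro u hu
        have h := hs u hu
        have hm : max u 0 = u := max_eq_left hu
        show HasDerivAt s (-(lam * x (max u 0)) * s u) u
        rw [hm]
        convert h using 1
        ring) t ht
    rw [this]
    exact mul_pos hs0 (Real.exp_pos _)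
  -- conservation of total mass
  have hsum' : ∀ t, 0 ≤ t → s t + x t + r t = 1 := by
    intro t ht
    have hc : ∀ u, 0 ≤ u → HasDerivAt (fun v => s v + x v + r v) 0 u := by
      intro u hu
      have h := ((hs u hu).add (hx u hu)).add (hr u hu)
      exact h.congr_deriv (by ring)
    have := sir_const_of_deriv_zero _ hc t ht
    rw [this, hsum]
  -- r is monotone on [0,∞) and bounded by 1
  have hrmono : MonotoneOn r (Set.Ici 0) :=
    sir_mono_of_deriv_nonneg r (fun t => mu * x t) 0 hr
      (fun t ht => mul_nonneg hmu.le (hxnn t ht))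
  have hrle1 : ∀ t, 0 ≤ t → r t ≤ 1 := by
    intro t ht
    have h1 := hsum' t ht
    have h2 := hspos t ht
    have h3 := hxnn t ht
    linarith
  have hrnn : ∀ t, 0 ≤ t → 0 ≤ r t := by
    intro t ht
    exact le_trans hr0 (hrmono (self_mem_Ici) ht ht)
  -- r converges
  set R : ℝ → ℝ := fun t => r (max t 0) with hRdef
  have hRmono : Monotone R := by
    intro a b hab
    exact hrmono (Set.mem_Ici.2 (le_max_right _ _)) (Set.mem_Ici.2 (le_max_right _ _)) (max_le_max hab le_rfl)
  have hRbdd : BddAbove (Set.range R) := by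
    refine ⟨1, ?_⟩
    rintro y ⟨t, rfl⟩
    exact hrle1 _ (le_max_right _ _)
  set rinf : ℝ := ⨆ t, R t with hrinfdef
  have hRlim : Tendsto R atTop (𝓝 rinf) := tendsto_atTop_ciSup hRmono hRbdd
  have hreq : (fun t => r t) =ᶠ[atTop] R := by
    filter_upwards [eventually_ge_atTop (0:ℝ)] with t ht
    simp only [hRdef, max_eq_left ht]
  have hrlim : Tendsto r atTop (𝓝 rinf) := hRlim.congr' hreq.symm
  have hr0le : r 0 ≤ rinf := by
    have := le_ciSup hRbdd 0
    simpa [hRdef] using this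
  have hrinfle1 : rinf ≤ 1 := ciSup_le fun t => hrle1 _ (le_max_right _ _)
  -- invariant linking s and r
  have hinv : ∀ t, 0 ≤ t →
      s t * Real.exp ((lam / mu) * r t) = s 0 * Real.exp ((lam / mu) * r 0) := by
    apply sir_const_of_deriv_zero
    intro t ht
    have h1 : HasDerivAt (fun u => s u * Real.exp ((lam / mu) * r u))
        (-(lam * s t * x t) * Real.exp ((lam / mu) * r t) +
          s t * (Real.exp ((lam / mu) * r t) * ((lam / mu) * (mu * x t)))) t :=
      (hs t ht).mul (((hr t ht).const_mul (lam / mu)).exp)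
    convert h1 using 1
    field_simp
    ring
  have hsformula : ∀ t, 0 ≤ t →
      s t = s 0 * Real.exp ((lam / mu) * (r 0 - r t)) := by
    intro t ht
    have h := hinv t ht
    have he : Real.exp ((lam / mu) * r t) ≠ 0 := Real.exp_ne_zero _
    have : s t = s 0 * Real.exp ((lam / mu) * r 0) / Real.exp ((lam / mu) * r t) := by
      field_simp at h ⊢
      linarith [h]
    rw [this, mul_div_assoc, ← Real.exp_sub]
    congr 1
    ring
  -- s converges
  set sinf : ℝ := s 0 * Real.exp ((lam / mu) * (r 0 - rinf)) with hsinfdef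
  have hslim : Tendsto s atTop (𝓝 sinf) := by
    have h1 : Tendsto (fun t => s 0 * Real.exp ((lam / mu) * (r 0 - r t))) atTop (𝓝 sinf) := by
      apply Tendsto.const_mul
      exact (Real.continuous_exp.tendsto _).comp
        ((tendsto_const_nhds.sub hrlim).const_mul (lam / mu))
    apply h1.congr'
    filter_upwards [eventually_ge_atTop (0:ℝ)] with t ht
    exact (hsformula t ht).symm
  have hsinfge : s 0 * Real.exp (-(lam / mu)) ≤ sinf := by
    apply mul_le_mul_of_nonneg_left _ hs0.le
    apply Real.exp_le_exp.2
    have h1 : r 0 - rinf ≥ -1 := by linarith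
    have h2 : 0 < lam / mu := div_pos hlam hmu
    nlinarith
  have hsinfpos : 0 < sinf := mul_pos hs0 (Real.exp_pos _)
  -- x converges to L := 1 - sinf - rinf
  set L : ℝ := 1 - sinf - rinf with hLdef
  have hxlim : Tendsto x atTop (𝓝 L) := by
    have h1 : Tendsto (fun t => 1 - s t - r t) atTop (𝓝 L) :=
      (tendsto_const_nhds.sub hslim).sub hrlim
    apply h1.congr'
    filter_upwards [eventually_ge_atTop (0:ℝ)] with t ht
    have := hsum' t ht
    linarith
  have hL0 : 0 ≤ L := by
    apply ge_of_tendsto hxlim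
    filter_upwards [eventually_ge_atTop (0:ℝ)] with t ht
    exact hxnn t ht
  -- L must be 0
  have hLzero : L = 0 := by
    by_contra hne
    have hLpos : 0 < L := lt_of_le_of_ne hL0 (Ne.symm hne)
    have hev : ∀ᶠ t in atTop, L / 2 ≤ x t ∧ (0:ℝ) ≤ t := by
      refine (hxlim.eventually (eventually_ge_nhds ?_)).and (eventually_ge_atTop 0)
      linarith
    obtain ⟨T, hT⟩ := eventually_atTop.1 hev
    have hT0 : 0 ≤ T := (hT T le_rfl).2
    -- on [T,∞), r grows at least linearly
    have hphi : MonotoneOn (fun u => r u - mu * (L / 2) * u) (Set.Ici T) := by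
      apply sir_mono_of_deriv_nonneg _ (fun u => mu * x u - mu * (L / 2)) T
      · intro u hu
        exact (hr u (le_trans hT0 hu)).sub ((hasDerivAt_id u).const_mul (mu * (L / 2)))
          |>.congr_deriv (by ring)
      · intro u hu
        have := (hT u hu).1
        nlinarith
    set t1 : ℝ := T + 4 / (mu * L) with ht1def
    have hmuL : 0 < mu * L := mul_pos hmu hLpos
    have hTt1 : T ≤ t1 := by
      rw [ht1def]
      have : 0 < 4 / (mu * L) := by positivity
      linarith
    have hkey := hphi (self_mem_Ici) hTt1 hTt1
    have hcalc : mu * (L / 2) * t1 - mu * (L / 2) * T = 2 := by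
      rw [ht1def]
      field_simp
      ring
    have h1 : r T + 2 ≤ r t1 := by
      simp only at hkey
      linarith
    have h2 : r t1 ≤ 1 := hrle1 t1 (le_trans hT0 hTt1)
    have h3 : 0 ≤ r T := hrnn T hT0
    linarith
  refine ⟨by rw [← hLzero]; exact hxlim, sinf, hslim, hsinfge, hsinfpos⟩
end

section
/- Let λ > 0 and μ > 0, and let s, x, r : [0,∞) → ℝ be differentiable functions satisfying ṡ(t) = −λs(t)x(t), ẋ(t) = λs(t)x(t) − μx(t), ṙ(t) = μx(t) for all t ≥ 0, with s(0) > 0, x(0) ≥ 0, r(0) ≥ 0 and s(0) + x(0) + r(0) = 1. Let s_∞ = lim_{t→∞} s(t) and r_∞ = lim_{t→∞} r(t) (these limits exist). Then the final size relation holds: s_∞ = s(0)·exp(−(λ/μ)(r_∞ − r(0))). -/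
open Filter Topology

/-- Final size relation for the population SIR model: if `s_∞` and `r_∞` denote
the limits of `s(t)` and `r(t)` as `t → ∞`, then
`s_∞ = s(0)·exp(−(λ/μ)(r_∞ − r(0)))`. -/
theorem population_sir_final_size (lam mu : ℝ) (hlam : 0 < lam) (hmu : 0 < mu)
    (s x r : ℝ → ℝ)
    (hs : ∀ t : ℝ, 0 ≤ t → HasDerivAt s (-(lam * s t * x t)) t)
    (hx : ∀ t : ℝ, 0 ≤ t → HasDerivAt x (lam * s t * x t - mu * x t) t)
    (hr : ∀ t : ℝ, 0 ≤ t → HasDerivAt r (mu * x t) t)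
    (hs0 : 0 < s 0) (hx0 : 0 ≤ x 0) (hr0 : 0 ≤ r 0)
    (hsum : s 0 + x 0 + r 0 = 1)
    (sinf rinf : ℝ)
    (hsinf : Tendsto s atTop (nhds sinf))
    (hrinf : Tendsto r atTop (nhds rinf)) :
    sinf = s 0 * Real.exp (-(lam / mu) * (rinf - r 0)) := by
  set F : ℝ → ℝ := fun t => s t * Real.exp ((lam / mu) * (r t - r 0)) with hF
  have hFderiv : ∀ t : ℝ, 0 ≤ t → HasDerivAt F 0 t := by
    intro t ht
    have h1 : HasDerivAt (fun t => Real.exp ((lam / mu) * (r t - r 0)))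
        (Real.exp ((lam / mu) * (r t - r 0)) * ((lam / mu) * (mu * x t))) t := by
      have hinner : HasDerivAt (fun t => (lam / mu) * (r t - r 0))
          ((lam / mu) * (mu * x t)) t := (((hr t ht).sub_const (r 0)).const_mul _)
      exact (Real.hasDerivAt_exp _).comp t hinner
    have := (hs t ht).mul h1
    refine this.congr_deriv ?_
    rw [show lam / mu * (mu * x t) = lam * x t by rw [← mul_assoc, div_mul_cancel₀ lam hmu.ne']]
    ring
  have hconst : ∀ t : ℝ, 0 ≤ t → F t = F 0 := by
    intro t ht
    have key : ∀ u ∈ Set.Icc (0:ℝ) t, F u = F 0 := by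
      apply constant_of_has_deriv_right_zero
      · exact fun u hu => ((hFderiv u hu.1).continuousAt).continuousWithinAt
      · exact fun u hu => ((hFderiv u hu.1).hasDerivWithinAt)
    exact key t ⟨ht, le_refl t⟩
  have hFlim : Tendsto F atTop (nhds (sinf * Real.exp ((lam / mu) * (rinf - r 0)))) := by
    exact hsinf.mul ((Real.continuous_exp.tendsto _).comp
      ((hrinf.sub_const (r 0)).const_mul (lam / mu)))
  have hFlim' : Tendsto F atTop (nhds (F 0)) := by
    apply Tendsto.congr' _ tendsto_const_nhds
    filter_upwards [eventually_ge_atTop (0:ℝ)] with t ht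
    exact (hconst t ht).symm
  have heq : sinf * Real.exp ((lam / mu) * (rinf - r 0)) = F 0 :=
    tendsto_nhds_unique hFlim hFlim'
  have hF0 : F 0 = s 0 := by simp [hF]
  rw [hF0] at heq
  have hexp : Real.exp (-(lam / mu) * (rinf - r 0)) *
      Real.exp ((lam / mu) * (rinf - r 0)) = 1 := by
    rw [← Real.exp_add]; ring_nf; exact Real.exp_zero
  calc sinf = sinf * (Real.exp ((lam / mu) * (rinf - r 0)) *
        Real.exp (-(lam / mu) * (rinf - r 0))) := by
        rw [mul_comm (Real.exp _), hexp, mul_one]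
    _ = (sinf * Real.exp ((lam / mu) * (rinf - r 0))) *
        Real.exp (-(lam / mu) * (rinf - r 0)) := by ring
    _ = s 0 * Real.exp (-(lam / mu) * (rinf - r 0)) := by rw [heq]
end

section
/- Let n ≥ 1, let A ∈ ℝ^{n×n} be a matrix with nonnegative entries, let λ_i > 0 and μ_i > 0 for each i, and let x : [0,∞) → ℝ^n be a differentiable function satisfying the network SIS equations ẋ_i(t) = λ_i(1 − x_i(t))·Σ_j a_{ij}x_j(t) − μ_i x_i(t) for all i and all t ≥ 0. If x(0) ∈ [0,1]^n, then x(t) ∈ [0,1]^n for all t ≥ 0 (the hypercube [0,1]^n is positively invariant for the network SIS dynamics). -/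
open Filter Topology

/-- Positive invariance of the hypercube `[0,1]^n` for the deterministic
network SIS dynamics `ẋ_i = λ_i(1 − x_i)·Σ_j a_{ij}x_j − μ_i x_i`. -/
theorem network_sis_invariance (n : ℕ) (hn : 1 ≤ n)
    (A : Matrix (Fin n) (Fin n) ℝ) (hA : ∀ i j, 0 ≤ A i j)
    (lam mu : Fin n → ℝ) (hlam : ∀ i, 0 < lam i) (hmu : ∀ i, 0 < mu i)
    (x : ℝ → Fin n → ℝ)
    (hx : ∀ (i : Fin n) (t : ℝ), 0 ≤ t →
      HasDerivAt (fun τ => x τ i)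
        (lam i * (1 - x t i) * (∑ j, A i j * x t j) - mu i * x t i) t)
    (h0 : ∀ i, x 0 i ∈ Set.Icc (0 : ℝ) 1) :
    ∀ t : ℝ, 0 ≤ t → ∀ i, x t i ∈ Set.Icc (0 : ℝ) 1 := by
  have hne : (Finset.univ : Finset (Fin n)).Nonempty := by
    have : Nonempty (Fin n) := ⟨⟨0, hn⟩⟩
    exact Finset.univ_nonempty
  -- `v t` is the sup-distance of `x t` to the cube `[0,1]^n`
  set v : ℝ → ℝ :=
    fun t => max (Finset.univ.sup' hne (fun i => max (x t i - 1) (-(x t i)))) 0 with hvdef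
  have hv0 : ∀ t, 0 ≤ v t := fun t => le_max_right _ _
  have hle1 : ∀ t i, x t i - 1 ≤ v t := fun t i =>
    le_trans (le_trans (le_max_left _ _)
      (Finset.le_sup' (fun i => max (x t i - 1) (-(x t i))) (Finset.mem_univ i)))
      (le_max_left _ _)
  have hle2 : ∀ t i, -(x t i) ≤ v t := fun t i =>
    le_trans (le_trans (le_max_right _ _)
      (Finset.le_sup' (fun i => max (x t i - 1) (-(x t i))) (Finset.mem_univ i)))
      (le_max_left _ _)
  set K : ℝ := ∑ i, 2 * lam i * ∑ j, A i j with hKdef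
  have hKi : ∀ i, 2 * lam i * (∑ j, A i j) ≤ K := by
    intro i
    apply Finset.single_le_sum (f := fun i => 2 * lam i * ∑ j, A i j)
      (fun k _ => mul_nonneg (by linarith [hlam k]) (Finset.sum_nonneg fun j _ => hA k j))
      (Finset.mem_univ i)
  have hK0 : 0 ≤ K :=
    Finset.sum_nonneg fun k _ =>
      mul_nonneg (by linarith [hlam k]) (Finset.sum_nonneg fun j _ => hA k j)
  have hcont : ∀ (i : Fin n) (t : ℝ), 0 ≤ t → ContinuousAt (fun τ => x τ i) t :=
    fun i t ht => (hx i t ht).continuousAt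
  have hvcont : ∀ t : ℝ, 0 ≤ t → ContinuousAt v t := by
    intro t ht
    refine ContinuousAt.sup' ?_ continuousAt_const
    exact ContinuousAt.finset_sup'_apply hne fun i _ =>
      ((hcont i t ht).sub continuousAt_const).sup' (hcont i t ht).neg
  -- the key derivative bound at active coordinates
  have hbound : ∀ t : ℝ, 0 ≤ t → v t ≤ 1 → ∀ i : Fin n,
      (x t i - 1 = v t →
        lam i * (1 - x t i) * (∑ j, A i j * x t j) - mu i * x t i ≤ K * v t) ∧
      (-(x t i) = v t →
        -(lam i * (1 - x t i) * (∑ j, A i j * x t j) - mu i * x t i) ≤ K * v t) := by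
    intro t ht hv1 i
    have hS : (0:ℝ) ≤ ∑ j, A i j := Finset.sum_nonneg fun j _ => hA i j
    have hSsum : -(v t) * (∑ j, A i j) ≤ ∑ j, A i j * x t j := by
      rw [Finset.mul_sum]
      refine Finset.sum_le_sum fun j _ => ?_
      rw [mul_comm]
      exact mul_le_mul_of_nonneg_left (by linarith [hle2 t j]) (hA i j)
    have hvt := hv0 t
    have hli := hlam i
    have hmi := hmu i
    have hKi' := hKi i
    constructor
    · intro heq
      have hx1 : x t i = 1 + v t := by linarith
      rw [hx1]
      nlinarith [mul_le_mul_of_nonneg_left hSsum (mul_nonneg hli.le hvt),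
        mul_nonneg (mul_nonneg hli.le hvt) hS,
        mul_nonneg (sub_nonneg.2 hKi') hvt]
    · intro heq
      have hx1 : x t i = -(v t) := by linarith
      rw [hx1]
      nlinarith [mul_le_mul_of_nonneg_left hSsum (by positivity : (0:ℝ) ≤ lam i * (1 + v t)),
        mul_nonneg (mul_nonneg hli.le hvt) hS,
        mul_nonneg (sub_nonneg.2 hKi') hvt]
  -- local Grönwall step: if `v a = 0` and `v ≤ 1` on `[a,b]`, then `v = 0` on `[a,b]`
  have hgron : ∀ a b : ℝ, 0 ≤ a → a ≤ b → v a = 0 →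
      (∀ s ∈ Set.Icc a b, v s ≤ 1) → ∀ s ∈ Set.Icc a b, v s = 0 := by
    intro a b ha hab hva hvle s hs
    have hcontOn : ContinuousOn v (Set.Icc a b) := fun u hu =>
      (hvcont u (le_trans ha hu.1)).continuousWithinAt
    have key := le_gronwallBound_of_liminf_deriv_right_le (f := v)
      (f' := fun u => K * v u) (δ := 0) (K := K) (ε := 0) (a := a) (b := b) hcontOn ?_
      (le_of_eq hva) (fun u _ => by simp) s hs
    · rw [gronwallBound_ε0_δ0] at key
      exact le_antisymm key (hv0 s)
    intro t ht r hr
    have ht0 : 0 ≤ t := le_trans ha ht.1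
    have hvt1 : v t ≤ 1 := hvle t ⟨ht.1, ht.2.le⟩
    have hr0 : 0 < r := lt_of_le_of_lt (mul_nonneg hK0 (hv0 t)) hr
    -- slope bound for each of the defining functions of `v`
    have comp : ∀ (f : ℝ → ℝ) (d : ℝ), HasDerivAt f d t → f t ≤ v t →
        (f t = v t → d ≤ K * v t) →
        ∀ᶠ z in 𝓝[>] t, f z < v t + r * (z - t) := by
      intro f d hd hft hbnd
      rcases eq_or_lt_of_le hft with heq | hlt
      · have hd' : d < r := lt_of_le_of_lt (hbnd heq) hr
        have hslope : ∀ᶠ z in 𝓝[>] t, slope f t z < r := by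
          have h1 : Filter.Tendsto (slope f t) (𝓝[≠] t) (𝓝 d) :=
            hasDerivAt_iff_tendsto_slope.1 hd
          have h2 : Filter.Tendsto (slope f t) (𝓝[>] t) (𝓝 d) :=
            h1.mono_left (nhdsWithin_mono t fun z hz => ne_of_gt hz)
          exact h2 (Iio_mem_nhds hd')
        filter_upwards [hslope, self_mem_nhdsWithin] with z hz hz'
        have hzt : (0:ℝ) < z - t := sub_pos.2 hz'
        have h3 : f z - f t < r * (z - t) := by
          simpa [slope_def_field, div_lt_iff₀ hzt] using hz
        linarith [heq ▸ h3]
      · have h1 : ∀ᶠ z in 𝓝 t, f z < v t := hd.continuousAt (Iio_mem_nhds hlt)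
        filter_upwards [h1.filter_mono nhdsWithin_le_nhds, self_mem_nhdsWithin]
          with z hz hz'
        nlinarith [mul_pos hr0 (sub_pos.2 (Set.mem_Ioi.1 hz'))]
    have hall : ∀ᶠ z in 𝓝[>] t, ∀ i : Fin n,
        x z i - 1 < v t + r * (z - t) ∧ -(x z i) < v t + r * (z - t) := by
      rw [eventually_all]
      intro i
      have hc1 := comp (fun τ => x τ i - 1) _ ((hx i t ht0).sub_const 1) (hle1 t i)
        (fun h => (hbound t ht0 hvt1 i).1 h)
      have hc2 := comp (fun τ => -(x τ i)) _ (hx i t ht0).neg (hle2 t i)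
        (fun h => (hbound t ht0 hvt1 i).2 h)
      exact hc1.and hc2
    apply Filter.Eventually.frequently
    filter_upwards [hall, self_mem_nhdsWithin] with z hz hz'
    have hzt : (0:ℝ) < z - t := sub_pos.2 hz'
    have hvz : v z < v t + r * (z - t) := by
      apply max_lt
      · exact (Finset.sup'_lt_iff hne).2 fun i _ => max_lt (hz i).1 (hz i).2
      · nlinarith [mul_pos hr0 hzt, hv0 t]
    rw [inv_mul_eq_div, div_lt_iff₀ hzt]
    linarith
  -- `v 0 = 0`
  have hva0 : v 0 = 0 := by
    apply le_antisymm _ (hv0 0)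
    apply max_le _ le_rfl
    exact Finset.sup'_le hne _ fun i _ =>
      max_le (by linarith [(h0 i).2]) (by linarith [(h0 i).1])
  -- global argument by continuous induction
  have hglobal : ∀ b : ℝ, 0 ≤ b → ∀ s ∈ Set.Icc (0:ℝ) b, v s = 0 := by
    intro b hb
    have hsub : Set.Icc (0:ℝ) b ⊆ {u | v u = 0} := by
      apply IsClosed.Icc_subset_of_forall_exists_gt
      · have : {u | v u = 0} ∩ Set.Icc (0:ℝ) b =
            Set.Icc (0:ℝ) b ∩ v ⁻¹' {0} := by
          ext u; simp [Set.mem_inter_iff, and_comm]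
        rw [this]
        exact ContinuousOn.preimage_isClosed_of_isClosed
          (fun u hu => (hvcont u hu.1).continuousWithinAt) isClosed_Icc isClosed_singleton
      · exact hva0
      · rintro u ⟨hu0, hu1, hu2⟩ y hy
        have hu0' : (0:ℝ) ≤ u := hu1
        -- find δ > 0 with v ≤ 1 near u
        have h1 : ∀ᶠ z in 𝓝 u, v z < 1 := by
          apply (hvcont u hu0') (Iio_mem_nhds _)
          rw [hu0]; norm_num
        rcases Metric.eventually_nhds_iff.1 h1 with ⟨δ, hδ0, hδ⟩
        set c := min (u + δ / 2) y with hc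
        have hcu : u < c := lt_min (by linarith) hy
        have hvc1 : ∀ s ∈ Set.Icc u c, v s ≤ 1 := by
          intro s hs
          have : dist s u < δ := by
            rw [Real.dist_eq, abs_lt]
            constructor
            · linarith [hs.1]
            · have : s ≤ u + δ / 2 := le_trans hs.2 (min_le_left _ _)
              linarith
          exact (hδ this).le
        have := hgron u c hu0' hcu.le hu0 hvc1 c ⟨hcu.le, le_rfl⟩
        exact ⟨c, this, hcu, min_le_right _ _⟩
    intro s hs
    exact hsub hs
  intro t ht i
  have hvt : v t = 0 := hglobal t ht t ⟨ht, le_rfl⟩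
  constructor
  · linarith [hle2 t i, hvt.le]
  · linarith [hle1 t i, hvt.le]
end

section
/- Let n ≥ 1, let A ∈ ℝ^{n×n} be a nonnegative irreducible matrix, let Λ = diag(λ_1,…,λ_n) and M = diag(μ_1,…,μ_n) with all λ_i > 0 and μ_i > 0, and suppose every eigenvalue of the matrix ΛA − M has nonpositive real part. Then every differentiable solution x : [0,∞) → ℝ^n of the heterogeneous network SIS dynamics ẋ_i(t) = λ_i(1 − x_i(t))·Σ_j a_{ij}x_j(t) − μ_i x_i(t) with x(0) ∈ [0,1]^n satisfies x(t) → 0 as t → ∞; that is, the disease-free equilibrium is globally asymptotically stable. -/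
open Filter Topology

/-- Irreducibility of a nonnegative matrix (strong connectivity of the
associated weighted digraph): some power of `A` has a positive `(i,j)` entry
for every pair of nodes `i, j`. -/
def MatrixIrreducible {n : ℕ} (A : Matrix (Fin n) (Fin n) ℝ) : Prop :=
  ∀ i j : Fin n, ∃ k : ℕ, 0 < (A ^ k) i j

open Set

/-- Upper Dini-type estimate for a finite sup of differentiable functions:
if every "active" index has derivative `< r`, then the slope of the sup is
eventually `< r` to the right. -/
lemma frequently_slope_sup'_lt {ι : Type*} [Fintype ι] [Nonempty ι]
    (f : ι → ℝ → ℝ) (d : ι → ℝ) (t : ℝ)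
    (hf : ∀ i, HasDerivAt (f i) (d i) t) (r : ℝ)
    (hr : ∀ i, f i t = Finset.univ.sup' Finset.univ_nonempty (fun j => f j t) → d i < r) :
    ∀ᶠ z in 𝓝[>] t, slope (fun τ => Finset.univ.sup' Finset.univ_nonempty fun i => f i τ) t z < r := by
  set g : ℝ → ℝ := fun τ => Finset.univ.sup' Finset.univ_nonempty fun i => f i τ with hg
  have key : ∀ i : ι, ∀ᶠ z in 𝓝[>] t, f i z < g t + r * (z - t) := by
    intro i
    rcases eq_or_lt_of_le (Finset.le_sup' (fun j => f j t) (Finset.mem_univ i)) with h | h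
    · -- active index
      have hd := hr i h
      have hft : f i t = g t := h
      have hs : Tendsto (slope (f i) t) (𝓝[>] t) (𝓝 (d i)) :=
        ((hasDerivAt_iff_tendsto_slope).1 (hf i)).mono_left
          (nhdsWithin_mono _ fun z hz => ne_of_gt hz)
      have := hs.eventually (eventually_lt_nhds hd)
      filter_upwards [this, self_mem_nhdsWithin] with z hz hz'
      rw [slope_def_field] at hz
      have hzt : 0 < z - t := sub_pos.2 hz'
      have := (div_lt_iff₀ hzt).1 hz
      rw [← hft]
      linarith
    · -- inactive index
      have h1 : Tendsto (fun z => f i z) (𝓝[>] t) (𝓝 (f i t)) :=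
        ((hf i).continuousAt.tendsto).mono_left nhdsWithin_le_nhds
      have h2 : Tendsto (fun z => g t + r * (z - t)) (𝓝[>] t) (𝓝 (g t)) := by
        have : Tendsto (fun z : ℝ => g t + r * (z - t)) (𝓝 t) (𝓝 (g t + r * (t - t))) := by
          exact (tendsto_const_nhds.add ((tendsto_id.sub_const t).const_mul r)).comp tendsto_id
        simpa using this.mono_left nhdsWithin_le_nhds
      exact h1.eventually_lt h2 h
  have hall := (Filter.eventually_all).2 key
  filter_upwards [hall, self_mem_nhdsWithin] with z hz hz'
  have hgz : g z < g t + r * (z - t) := by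
    apply (Finset.sup'_lt_iff Finset.univ_nonempty).2
    intro i _
    exact hz i
  rw [slope_def_field]
  rw [div_lt_iff₀ (sub_pos.2 hz')]
  linarith

lemma charpoly_root_of_eig {n : ℕ} (M : Matrix (Fin n) (Fin n) ℝ) (v : Fin n → ℝ)
    (hv : v ≠ 0) (ρ : ℝ) (h : M.mulVec v = ρ • v) :
    ((M.map (algebraMap ℝ ℂ)).charpoly).IsRoot ((ρ : ℂ)) := by
  have hreal : M.charpoly.IsRoot ρ := by
    have hdet : ((Matrix.diagonal (fun _ : Fin n => ρ)) - M).det = 0 := by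
      rw [← Matrix.exists_mulVec_eq_zero_iff]
      refine ⟨v, hv, ?_⟩
      rw [Matrix.sub_mulVec, h]
      ext i
      simp [Matrix.mulVec_diagonal]
    have : M.charpoly.eval ρ = ((Matrix.diagonal (fun _ : Fin n => ρ)) - M).det := by
      rw [Matrix.charpoly, ← Polynomial.coe_evalRingHom, RingHom.map_det]
      congr 1
      ext i j
      by_cases hij : i = j
      · subst hij; simp [Matrix.charmatrix_apply_eq]
      · simp [Matrix.charmatrix_apply_ne _ _ _ hij, Matrix.diagonal_apply_ne _ hij]
    exact this.trans hdet
  rw [Matrix.charpoly_map]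
  have : Polynomial.eval ((algebraMap ℝ ℂ) ρ) (M.charpoly.map (algebraMap ℝ ℂ))
      = (algebraMap ℝ ℂ) (M.charpoly.eval ρ) := by
    rw [Polynomial.eval_map, Polynomial.eval₂_at_apply]
  simpa [Polynomial.IsRoot, hreal.eq_zero] using this

lemma perron_positive {n : ℕ} (hn : 0 < n) (Q : Matrix (Fin n) (Fin n) ℝ)
    (hQ : ∀ i j, 0 < Q i j) :
    ∃ r : ℝ, 0 < r ∧ ∃ w : Fin n → ℝ, (∀ i, 0 < w i) ∧ Q.mulVec w = r • w := by
  haveI : Nonempty (Fin n) := ⟨⟨0, hn⟩⟩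
  obtain ⟨R, hRdef⟩ : ∃ R : ℝ, R = (∑ i, ∑ j, Q i j) + 1 := ⟨_, rfl⟩
  have hR0 : 0 ≤ ∑ i, ∑ j, Q i j :=
    Finset.sum_nonneg fun i _ => Finset.sum_nonneg fun j _ => (hQ i j).le
  have hR1 : (1:ℝ) ≤ R := by rw [hRdef]; linarith
  obtain ⟨C, hCdef⟩ : ∃ C : Set (ℝ × (Fin n → ℝ)), C =
      {p | p.1 ∈ Icc (0:ℝ) R ∧ (∀ i, 0 ≤ p.2 i) ∧ (∑ i, p.2 i) = 1 ∧
        ∀ i, p.1 * p.2 i ≤ Q.mulVec p.2 i} := ⟨_, rfl⟩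
  have hmemC : ∀ ρ y, ((ρ, y) ∈ C ↔ (ρ ∈ Icc (0:ℝ) R ∧ (∀ i, 0 ≤ y i) ∧ (∑ i, y i) = 1 ∧
      ∀ i, ρ * y i ≤ Q.mulVec y i)) := by
    intro ρ y; rw [hCdef]; rfl
  -- any feasible rho is < R
  have hfeas_lt : ∀ p ∈ C, p.1 < R := by
    rintro ⟨ρ, y⟩ hp
    obtain ⟨hρ, hy0, hy1, hineq⟩ := (hmemC ρ y).1 hp
    have h1 : ρ = ∑ i, ρ * y i := by rw [← Finset.mul_sum, hy1, mul_one]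
    have h2 : ∑ i, ρ * y i ≤ ∑ i, Q.mulVec y i :=
      Finset.sum_le_sum fun i _ => hineq i
    have h3 : ∑ i, Q.mulVec y i ≤ ∑ i, ∑ j, Q i j := by
      refine Finset.sum_le_sum fun i _ => ?_
      unfold Matrix.mulVec dotProduct
      refine Finset.sum_le_sum fun j _ => ?_
      have hyj : y j ≤ 1 := by
        rw [← hy1]
        exact Finset.single_le_sum (fun k _ => hy0 k) (Finset.mem_univ j)
      nlinarith [hQ i j, hy0 j]
    have h4 : ρ ≤ ∑ i, ∑ j, Q i j := by linarith
    rw [hRdef]; linarith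
  -- C is compact
  have hclosed : IsClosed C := by
    rw [hCdef]
    have e1 : {p : ℝ × (Fin n → ℝ) | p.1 ∈ Icc (0:ℝ) R ∧ (∀ i, 0 ≤ p.2 i) ∧ (∑ i, p.2 i) = 1 ∧
        ∀ i, p.1 * p.2 i ≤ Q.mulVec p.2 i} =
        (Prod.fst ⁻¹' Icc (0:ℝ) R) ∩ ((⋂ i, {p : ℝ × (Fin n → ℝ) | 0 ≤ p.2 i}) ∩
          ({p : ℝ × (Fin n → ℝ) | (∑ i, p.2 i) = 1} ∩
            ⋂ i, {p : ℝ × (Fin n → ℝ) | p.1 * p.2 i ≤ Q.mulVec p.2 i})) := by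
      ext p; simp only [Set.mem_setOf_eq, Set.mem_inter_iff, Set.mem_preimage, Set.mem_iInter]
    rw [e1]
    refine (isClosed_Icc.preimage continuous_fst).inter (IsClosed.inter ?_ (IsClosed.inter ?_ ?_))
    · exact isClosed_iInter fun i =>
        isClosed_le continuous_const ((continuous_apply i).comp continuous_snd)
    · exact isClosed_eq (by fun_prop) continuous_const
    · refine isClosed_iInter fun i => isClosed_le (by fun_prop) ?_
      have h2 : Continuous fun p : ℝ × (Fin n → ℝ) => ∑ j, Q i j * p.2 j := by fun_prop
      have e2 : (fun p : ℝ × (Fin n → ℝ) => Q.mulVec p.2 i)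
          = fun p => ∑ j, Q i j * p.2 j := by
        ext p; simp [Matrix.mulVec, dotProduct]
      rw [e2]; exact h2
  have hsubset : C ⊆ Icc (0:ℝ) R ×ˢ Icc (0 : Fin n → ℝ) 1 := by
    rintro ⟨ρ, y⟩ hp
    obtain ⟨hρ, hy0, hy1, _⟩ := (hmemC ρ y).1 hp
    refine ⟨hρ, fun i => hy0 i, fun i => ?_⟩
    show y i ≤ 1
    rw [← hy1]
    exact Finset.single_le_sum (fun k _ => hy0 k) (Finset.mem_univ i)
  have hcomp : IsCompact C :=
    IsCompact.of_isClosed_subset (isCompact_Icc.prod isCompact_Icc) hclosed hsubset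
  -- C is nonempty, with a positive rho value
  have hnpos : (0:ℝ) < n := Nat.cast_pos.2 hn
  have hsumu : ∑ _i : Fin n, (n:ℝ)⁻¹ = 1 := by
    simp [Finset.sum_const, Finset.card_univ]
    field_simp
  obtain ⟨qmin, hqmin⟩ : ∃ q : ℝ, q = Finset.univ.inf' Finset.univ_nonempty
      (fun i => ∑ j, Q i j) := ⟨_, rfl⟩
  have hqminpos : 0 < qmin := by
    rw [hqmin]
    exact (Finset.lt_inf'_iff _).2 fun i _ => Finset.sum_pos (fun j _ => hQ i j)
      Finset.univ_nonempty
  have hqminle : ∀ i, qmin ≤ ∑ j, Q i j := fun i =>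
    hqmin ▸ Finset.inf'_le _ (Finset.mem_univ i)
  obtain ⟨ρ1, hρ1⟩ : ∃ ρ1 : ℝ, ρ1 = min qmin R := ⟨_, rfl⟩
  have hρ1pos : 0 < ρ1 := hρ1 ▸ lt_min hqminpos (by linarith)
  have hmemρ1 : (ρ1, fun _ : Fin n => (n:ℝ)⁻¹) ∈ C := by
    rw [hmemC]
    refine ⟨⟨hρ1pos.le, hρ1 ▸ min_le_right _ _⟩, fun i => by positivity, hsumu, fun i => ?_⟩
    have e3 : Q.mulVec (fun _ => (n:ℝ)⁻¹) i = (∑ j, Q i j) * (n:ℝ)⁻¹ := by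
      simp [Matrix.mulVec, dotProduct, Finset.sum_mul]
    rw [e3]
    have h1 : ρ1 ≤ ∑ j, Q i j := le_trans (hρ1 ▸ min_le_left _ _) (hqminle i)
    have h2 : (0:ℝ) < (n:ℝ)⁻¹ := by positivity
    nlinarith
  -- maximize rho over C
  obtain ⟨⟨r, w⟩, hmem, hmax⟩ :=
    hcomp.exists_isMaxOn ⟨_, hmemρ1⟩ continuous_fst.continuousOn
  obtain ⟨hrIcc, hw0, hw1, hineq⟩ := (hmemC r w).1 hmem
  have hrpos : 0 < r := lt_of_lt_of_le hρ1pos (hmax hmemρ1)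
  -- y := Q w is strictly positive
  obtain ⟨y, hydef⟩ : ∃ y, y = Q.mulVec w := ⟨_, rfl⟩
  have hineqy : ∀ i, r * w i ≤ y i := by rw [hydef]; exact hineq
  obtain ⟨j0, hj0⟩ : ∃ j, 0 < w j := by
    by_contra hcon
    push_neg at hcon
    have hz : ∀ j, w j = 0 := fun j => le_antisymm (hcon j) (hw0 j)
    simp [hz] at hw1
  have hypos : ∀ i, 0 < y i := by
    intro i
    have h1 : Q i j0 * w j0 ≤ ∑ j, Q i j * w j :=
      Finset.single_le_sum (fun k _ => mul_nonneg (hQ i k).le (hw0 k)) (Finset.mem_univ j0)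
    have h2 : 0 < Q i j0 * w j0 := mul_pos (hQ i j0) hj0
    have h3 : y i = ∑ j, Q i j * w j := by
      rw [hydef]; simp [Matrix.mulVec, dotProduct]
    rw [h3]; linarith
  -- show Q w = r w
  by_cases heqw : Q.mulVec w = r • w
  · refine ⟨r, hrpos, w, fun i => ?_, heqw⟩
    have h1 : y i = r * w i := by
      rw [hydef, heqw]; simp
    have := hypos i
    rw [h1] at this
    nlinarith
  · exfalso
    obtain ⟨z, hzdef⟩ : ∃ z, z = y - r • w := ⟨_, rfl⟩
    have hzi : ∀ i, z i = y i - r * w i := fun i => by rw [hzdef]; simp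
    have hz0 : ∀ i, 0 ≤ z i := fun i => by rw [hzi i]; linarith [hineqy i]
    obtain ⟨i0, hi0⟩ : ∃ i, 0 < z i := by
      by_contra hcon
      push_neg at hcon
      apply heqw
      ext i
      have h1 : z i = 0 := le_antisymm (hcon i) (hz0 i)
      rw [hzi i] at h1
      have h2 : y i = Q.mulVec w i := by rw [hydef]
      simp only [Pi.smul_apply, smul_eq_mul]
      linarith [h2 ▸ h1]
    have hQz : ∀ i, 0 < Q.mulVec z i := by
      intro i
      have h1 : Q i i0 * z i0 ≤ ∑ j, Q i j * z j :=
        Finset.single_le_sum (fun k _ => mul_nonneg (hQ i k).le (hz0 k)) (Finset.mem_univ i0)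
      have h2 : 0 < Q i i0 * z i0 := mul_pos (hQ i i0) hi0
      have h3 : Q.mulVec z i = ∑ j, Q i j * z j := by
        simp [Matrix.mulVec, dotProduct]
      rw [h3]; linarith
    obtain ⟨δ, hδdef⟩ : ∃ δ : ℝ, δ = Finset.univ.inf' Finset.univ_nonempty
        (fun i => Q.mulVec z i) := ⟨_, rfl⟩
    have hδpos : 0 < δ := hδdef ▸ (Finset.lt_inf'_iff _).2 fun i _ => hQz i
    have hδle : ∀ i, δ ≤ Q.mulVec z i := fun i => hδdef ▸ Finset.inf'_le _ (Finset.mem_univ i)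
    obtain ⟨Y, hYdef⟩ : ∃ Y : ℝ, Y = Finset.univ.sup' Finset.univ_nonempty y := ⟨_, rfl⟩
    have hYle : ∀ i, y i ≤ Y := fun i => hYdef ▸ Finset.le_sup' _ (Finset.mem_univ i)
    have hYpos : 0 < Y := lt_of_lt_of_le (hypos (Classical.arbitrary _)) (hYle _)
    obtain ⟨ε, hεdef⟩ : ∃ ε : ℝ, ε = δ / Y := ⟨_, rfl⟩
    have hεpos : 0 < ε := hεdef ▸ div_pos hδpos hYpos
    -- Q y ≥ (r + ε) y
    have hkey : ∀ i, (r + ε) * y i ≤ Q.mulVec y i := by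
      intro i
      have hsplit : y = r • w + z := by rw [hzdef]; abel
      have hQy : Q.mulVec y i = r * Q.mulVec w i + Q.mulVec z i := by
        rw [hsplit, Matrix.mulVec_add, Matrix.mulVec_smul]
        simp
      have hQwy : Q.mulVec w i = y i := by rw [hydef]
      have h1 : ε * y i ≤ δ := by
        rw [hεdef, div_mul_eq_mul_div, div_le_iff₀ hYpos]
        nlinarith [(hypos i).le, hYle i]
      rw [hQy, hQwy]
      linarith [hδle i]
    -- normalize y and contradict maximality
    obtain ⟨σ, hσdef⟩ : ∃ σ : ℝ, σ = ∑ i, y i := ⟨_, rfl⟩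
    have hσpos : 0 < σ := hσdef ▸ Finset.sum_pos (fun i _ => hypos i) Finset.univ_nonempty
    obtain ⟨ρ', hρ'def⟩ : ∃ ρ' : ℝ, ρ' = min (r + ε) R := ⟨_, rfl⟩
    have hrltR : r < R := hfeas_lt _ hmem
    have hρ'gt : r < ρ' := by
      rcases le_or_gt (r + ε) R with h | h
      · rw [hρ'def, min_eq_left h]; linarith
      · rw [hρ'def, min_eq_right h.le]; exact hrltR
    have hfeas' : (ρ', σ⁻¹ • y) ∈ C := by
      rw [hmemC]
      have hσinv : 0 < σ⁻¹ := by positivity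
      refine ⟨⟨by linarith, hρ'def ▸ min_le_right _ _⟩,
        fun i => by have := (hypos i).le; simp only [Pi.smul_apply, smul_eq_mul]; positivity,
        ?_, fun i => ?_⟩
      · simp only [Pi.smul_apply, smul_eq_mul, ← Finset.mul_sum, ← hσdef]
        field_simp
      · have h2 : Q.mulVec (σ⁻¹ • y) i = σ⁻¹ * Q.mulVec y i := by
          rw [Matrix.mulVec_smul]; simp
        have h1 : ρ' ≤ r + ε := hρ'def ▸ min_le_left _ _
        have h3 := hkey i
        have h4 : 0 ≤ y i := (hypos i).le
        simp only [Pi.smul_apply, smul_eq_mul]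
        rw [h2]
        calc ρ' * (σ⁻¹ * y i) = σ⁻¹ * (ρ' * y i) := by ring
          _ ≤ σ⁻¹ * ((r + ε) * y i) :=
            mul_le_mul_of_nonneg_left (mul_le_mul_of_nonneg_right h1 h4) hσinv.le
          _ ≤ σ⁻¹ * Q.mulVec y i := mul_le_mul_of_nonneg_left h3 hσinv.le
    have hle := hmax hfeas'
    simp only at hle
    exact absurd hle (not_le.2 hρ'gt)

lemma pow_entry_nonneg {n : ℕ} {M : Matrix (Fin n) (Fin n) ℝ}
    (h : ∀ i j, 0 ≤ M i j) (k : ℕ) : ∀ i j, 0 ≤ (M ^ k) i j := by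
  induction k with
  | zero =>
    intro i j
    rw [pow_zero, Matrix.one_apply]
    split <;> norm_num
  | succ k ih =>
    intro i j
    rw [pow_succ, Matrix.mul_apply]
    exact Finset.sum_nonneg fun l _ => mul_nonneg (ih i l) (h l j)

lemma entry_pow_mono {n : ℕ} {M N : Matrix (Fin n) (Fin n) ℝ}
    (hM : ∀ i j, 0 ≤ M i j) (h : ∀ i j, M i j ≤ N i j) (k : ℕ) :
    ∀ i j, (M ^ k) i j ≤ (N ^ k) i j := by
  induction k with
  | zero => intro i j; rw [pow_zero, pow_zero]
  | succ k ih =>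
    intro i j
    rw [pow_succ, pow_succ, Matrix.mul_apply, Matrix.mul_apply]
    refine Finset.sum_le_sum fun l _ => ?_
    exact mul_le_mul (ih i l) (h l j) (hM l j) (le_trans (pow_entry_nonneg hM k i l) (ih i l))

lemma mul_entry_lower {n : ℕ} {X Y : Matrix (Fin n) (Fin n) ℝ}
    (hX : ∀ i j, 0 ≤ X i j) (hY : ∀ i j, 0 ≤ Y i j) (i j l : Fin n) :
    X i l * Y l j ≤ (X * Y) i j := by
  rw [Matrix.mul_apply]
  exact Finset.single_le_sum (fun k _ => mul_nonneg (hX i k) (hY k j)) (Finset.mem_univ l)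

/-- one ≤ (A+1)^m entrywise on the diagonal, and entries are nonneg -/
lemma one_le_pow_diag {n : ℕ} {A : Matrix (Fin n) (Fin n) ℝ} (hA : ∀ i j, 0 ≤ A i j) (m : ℕ) :
    ∀ i j, ((1 : Matrix (Fin n) (Fin n) ℝ)) i j ≤ ((A + 1) ^ m) i j := by
  have h1 : ∀ i j, (0:ℝ) ≤ (1 : Matrix (Fin n) (Fin n) ℝ) i j := by
    intro i j; rw [Matrix.one_apply]; split <;> norm_num
  have h2 : ∀ i j, (1 : Matrix (Fin n) (Fin n) ℝ) i j ≤ (A + 1) i j := by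
    intro i j
    rw [Matrix.add_apply]
    have := hA i j
    linarith
  have := entry_pow_mono h1 h2 m
  intro i j
  calc (1 : Matrix (Fin n) (Fin n) ℝ) i j = ((1 : Matrix (Fin n) (Fin n) ℝ) ^ m) i j := by
        rw [one_pow]
    _ ≤ ((A + 1) ^ m) i j := this i j

lemma apow_le_a1pow {n : ℕ} {A : Matrix (Fin n) (Fin n) ℝ} (hA : ∀ i j, 0 ≤ A i j) :
    ∀ k m, m ≤ k → ∀ i j, (A ^ m) i j ≤ ((A + 1) ^ k) i j := by
  have hA1 : ∀ i j, (0:ℝ) ≤ (A + 1) i j := by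
    intro i j
    rw [Matrix.add_apply, Matrix.one_apply]
    have := hA i j
    split <;> linarith
  intro k
  induction k with
  | zero =>
    intro m hm i j
    interval_cases m
    rw [pow_zero, pow_zero]
  | succ k ih =>
    intro m hm i j
    match m with
    | 0 =>
      rw [pow_zero]
      exact one_le_pow_diag hA (k+1) i j
    | (m' + 1) =>
      rw [pow_succ, pow_succ]
      rw [Matrix.mul_apply, Matrix.mul_apply]
      refine Finset.sum_le_sum fun l _ => ?_
      have h1 : (A ^ m') i l ≤ ((A + 1) ^ k) i l := ih m' (Nat.succ_le_succ_iff.1 hm) i l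
      have h2 : A l j ≤ (A + 1) l j := by
        rw [Matrix.add_apply, Matrix.one_apply]
        have := hA l j
        split <;> linarith
      exact mul_le_mul h1 h2 (hA l j) (le_trans (pow_entry_nonneg hA m' i l) h1)

/-- Existence of a real eigenvalue with positive eigenvector for `ΛA - M`. -/
lemma exists_perron_eig {n : ℕ} (hn : 0 < n) (A : Matrix (Fin n) (Fin n) ℝ)
    (hA : ∀ i j, 0 ≤ A i j) (hirr : MatrixIrreducible A)
    (lam mu : Fin n → ℝ) (hlam : ∀ i, 0 < lam i) (hmu : ∀ i, 0 < mu i) :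
    ∃ (ρ : ℝ) (v : Fin n → ℝ), (∀ i, 0 < v i) ∧
      (Matrix.diagonal lam * A - Matrix.diagonal mu).mulVec v = ρ • v := by
  haveI : Nonempty (Fin n) := ⟨⟨0, hn⟩⟩
  obtain ⟨B, hBdef⟩ : ∃ B, B = Matrix.diagonal lam * A - Matrix.diagonal mu := ⟨_, rfl⟩
  obtain ⟨d, hddef⟩ : ∃ d : ℝ, d = 1 + Finset.univ.sup' Finset.univ_nonempty mu := ⟨_, rfl⟩
  have hd : ∀ i, mu i + 1 ≤ d := by
    intro i
    rw [hddef]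
    linarith [Finset.le_sup' mu (Finset.mem_univ i)]
  obtain ⟨P, hPdef⟩ : ∃ P, P = B + d • (1 : Matrix (Fin n) (Fin n) ℝ) := ⟨_, rfl⟩
  have hPentry : ∀ i j, P i j = lam i * A i j + (if i = j then d - mu i else 0) := by
    intro i j
    rw [hPdef, hBdef]
    rw [Matrix.add_apply, Matrix.sub_apply, Matrix.smul_apply, Matrix.one_apply,
      Matrix.diagonal_mul, Matrix.diagonal_apply]
    split <;> simp <;> ring
  obtain ⟨c, hcdef⟩ : ∃ c : ℝ, c = min 1 (Finset.univ.inf' Finset.univ_nonempty lam) :=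
    ⟨_, rfl⟩
  have hcpos : 0 < c := by
    rw [hcdef]
    exact lt_min one_pos ((Finset.lt_inf'_iff _).2 fun i _ => hlam i)
  have hc1 : c ≤ 1 := hcdef ▸ min_le_left _ _
  have hclam : ∀ i, c ≤ lam i := fun i =>
    le_trans (hcdef ▸ min_le_right _ _) (Finset.inf'_le _ (Finset.mem_univ i))
  -- P dominates c • (A + 1)
  have hdom : ∀ i j, (c • (A + 1)) i j ≤ P i j := by
    intro i j
    rw [hPentry, Matrix.smul_apply, Matrix.add_apply, Matrix.one_apply]
    have h1 : c * A i j ≤ lam i * A i j :=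
      mul_le_mul_of_nonneg_right (hclam i) (hA i j)
    by_cases hij : i = j
    · simp only [hij, if_true, smul_eq_mul]
      have := hd j
      have := hA j j
      have h1' : c * A j j ≤ lam j * A j j :=
        mul_le_mul_of_nonneg_right (hclam j) (hA j j)
      nlinarith
    · simp only [hij, if_false, smul_eq_mul]
      linarith
  have hcA1nonneg : ∀ i j, (0:ℝ) ≤ (c • (A + 1)) i j := by
    intro i j
    rw [Matrix.smul_apply, Matrix.add_apply, Matrix.one_apply, smul_eq_mul]
    have := hA i j
    have := hcpos.le
    split <;> nlinarith
  -- choose K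
  obtain ⟨kf, hkf⟩ : ∃ kf : Fin n × Fin n → ℕ, ∀ p, 0 < (A ^ (kf p)) p.1 p.2 := by
    choose kf hkf using fun p : Fin n × Fin n => hirr p.1 p.2
    exact ⟨kf, hkf⟩
  obtain ⟨K, hKdef⟩ : ∃ K : ℕ, K = 1 + Finset.univ.sup kf := ⟨_, rfl⟩
  have hK1 : 1 ≤ K := by rw [hKdef]; omega
  have hKge : ∀ p, kf p ≤ K := by
    intro p
    rw [hKdef]
    have := Finset.le_sup (f := kf) (Finset.mem_univ p)
    omega
  -- Q := P^K is entrywise positive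
  have hPnonneg : ∀ i j, (0:ℝ) ≤ P i j := fun i j =>
    le_trans (hcA1nonneg i j) (hdom i j)
  have hQpos : ∀ i j, 0 < (P ^ K) i j := by
    intro i j
    have h1 : ((c • (A + 1)) ^ K) i j ≤ (P ^ K) i j :=
      entry_pow_mono hcA1nonneg hdom K i j
    have h2 : ((c • (A + 1)) ^ K) i j = c ^ K * ((A + 1) ^ K) i j := by
      rw [smul_pow, Matrix.smul_apply, smul_eq_mul]
    have hA1nonneg : ∀ i j, (0:ℝ) ≤ (A + 1) i j := by
      intro i j
      rw [Matrix.add_apply, Matrix.one_apply]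
      have := hA i j
      split <;> linarith
    -- ((A+1)^K) i j > 0
    have h3 : 0 < ((A + 1) ^ K) i j := by
      have hk := hkf (i, j)
      have hkK := hKge (i, j)
      have e1 : (A + 1) ^ K = (A + 1) ^ (kf (i,j)) * (A + 1) ^ (K - kf (i,j)) := by
        rw [← pow_add]
        congr 1
        omega
      have h4 : ((A + 1) ^ (kf (i,j))) i j * ((A + 1) ^ (K - kf (i,j))) j j
          ≤ ((A + 1) ^ K) i j := by
        rw [e1]
        exact mul_entry_lower (pow_entry_nonneg hA1nonneg _) (pow_entry_nonneg hA1nonneg _) i j j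
      have h5 : 0 < ((A + 1) ^ (kf (i,j))) i j :=
        lt_of_lt_of_le hk (apow_le_a1pow hA _ _ le_rfl i j)
      have h6 : (1:ℝ) ≤ ((A + 1) ^ (K - kf (i,j))) j j := by
        have := one_le_pow_diag hA (K - kf (i,j)) j j
        rwa [Matrix.one_apply_eq] at this
      nlinarith
    calc (0:ℝ) < c ^ K * ((A + 1) ^ K) i j := by positivity
      _ = ((c • (A + 1)) ^ K) i j := h2.symm
      _ ≤ (P ^ K) i j := h1
  -- Perron for P^K
  obtain ⟨r, hr, w, hw, heig⟩ := perron_positive hn (P ^ K) hQpos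
  -- K-th root
  obtain ⟨s, hsdef⟩ : ∃ s : ℝ, s = r ^ ((K:ℝ)⁻¹) := ⟨_, rfl⟩
  have hspos : 0 < s := hsdef ▸ Real.rpow_pos_of_pos hr _
  have hsK : s ^ K = r := by
    rw [hsdef, ← Real.rpow_natCast (r ^ ((K:ℝ)⁻¹)) K, ← Real.rpow_mul hr.le]
    rw [inv_mul_cancel₀ (by positivity : (K:ℝ) ≠ 0), Real.rpow_one]
  -- build eigenvector of P
  obtain ⟨g, hgdef⟩ : ∃ g : ℕ → Fin n → ℝ,
      g = fun m => s ^ (K - m) • (P ^ m).mulVec w := ⟨_, rfl⟩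
  obtain ⟨v, hvdef⟩ : ∃ v : Fin n → ℝ, v = ∑ j ∈ Finset.range K, g (j + 1) := ⟨_, rfl⟩
  have hgK : g K = r • w := by
    rw [hgdef]
    simp only [Nat.sub_self, pow_zero, one_smul]
    exact heig
  have hg0 : g 0 = (s ^ K) • w := by
    rw [hgdef]
    simp only [Nat.sub_zero, pow_zero, Matrix.one_mulVec]
  have hveq : v = ∑ j ∈ Finset.range K, g j := by
    have h1 := Finset.sum_range_succ' g K
    have h2 := Finset.sum_range_succ g K
    rw [hgK] at h2
    rw [hg0, hsK] at h1
    rw [hvdef]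
    have h3 := h1.symm.trans h2
    exact add_right_cancel h3
  -- v is positive
  have hmulVec_nonneg : ∀ (m : ℕ) (i : Fin n), 0 ≤ (P ^ m).mulVec w i := by
    intro m i
    unfold Matrix.mulVec dotProduct
    exact Finset.sum_nonneg fun l _ =>
      mul_nonneg (pow_entry_nonneg hPnonneg m i l) (hw l).le
  have hvpos : ∀ i, 0 < v i := by
    intro i
    rw [hveq]
    have hsum_apply : (∑ j ∈ Finset.range K, g j) i = ∑ j ∈ Finset.range K, g j i := by
      rw [Finset.sum_apply]
    rw [hsum_apply]
    refine Finset.sum_pos' (fun j _ => ?_) ⟨0, Finset.mem_range.2 hK1, ?_⟩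
    · rw [hgdef]
      simp only [Pi.smul_apply, smul_eq_mul]
      have := hmulVec_nonneg j i
      positivity
    · rw [hg0]
      simp only [Pi.smul_apply, smul_eq_mul]
      have := hw i
      positivity
  -- P v = s v
  have hPv : P.mulVec v = s • v := by
    have hstep : ∀ j, P.mulVec (g j) = s ^ (K - j) • (P ^ (j+1)).mulVec w := by
      intro j
      rw [hgdef]
      simp only
      rw [Matrix.mulVec_smul, Matrix.mulVec_mulVec, ← pow_succ']
    have hL : P.mulVec v = ∑ j ∈ Finset.range K, s ^ (K - j) • (P ^ (j+1)).mulVec w := by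
      rw [hveq, ← Matrix.mulVecLin_apply, map_sum]
      refine Finset.sum_congr rfl fun j _ => ?_
      rw [Matrix.mulVecLin_apply, hstep]
    have hR : s • v = ∑ j ∈ Finset.range K, s ^ (K - j) • (P ^ (j+1)).mulVec w := by
      rw [hvdef, Finset.smul_sum]
      refine Finset.sum_congr rfl fun j hj => ?_
      rw [hgdef]
      simp only
      rw [smul_smul, ← pow_succ']
      congr 2
      have := Finset.mem_range.1 hj
      omega
    rw [hL, hR]
  -- conclude for B
  refine ⟨s - d, v, hvpos, ?_⟩
  have hB : B = P - d • (1 : Matrix (Fin n) (Fin n) ℝ) := by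
    rw [hPdef]; abel
  rw [← hBdef, hB, Matrix.sub_mulVec, Matrix.smul_mulVec, Matrix.one_mulVec, hPv,
    sub_smul]

lemma sis_nonneg {n : ℕ} (hn : 0 < n) (A : Matrix (Fin n) (Fin n) ℝ)
    (hA : ∀ i j, 0 ≤ A i j) (lam mu : Fin n → ℝ)
    (hlam : ∀ i, 0 < lam i) (hmu : ∀ i, 0 < mu i)
    (x : ℝ → Fin n → ℝ)
    (hx : ∀ (i : Fin n) (t : ℝ), 0 ≤ t →
      HasDerivAt (fun τ => x τ i)
        (lam i * (1 - x t i) * (∑ j, A i j * x t j) - mu i * x t i) t)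
    (h0 : ∀ i, 0 ≤ x 0 i) :
    ∀ t, 0 ≤ t → ∀ i, 0 ≤ x t i := by
  haveI : Nonempty (Fin n) := ⟨⟨0, hn⟩⟩
  intro T hT
  -- the max of (-x) and 0
  obtain ⟨f, hfdef⟩ : ∃ f : Option (Fin n) → ℝ → ℝ,
      f = fun o => o.elim (fun _ => (0:ℝ)) (fun i τ => - x τ i) := ⟨_, rfl⟩
  have hfnoneF : f none = fun _ => (0:ℝ) := by rw [hfdef]; rfl
  have hfsomeF : ∀ i, f (some i) = fun τ => - x τ i := fun i => by rw [hfdef]; rfl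
  have hfnone : ∀ τ, f none τ = 0 := fun τ => by rw [hfnoneF]
  have hfsome : ∀ i τ, f (some i) τ = - x τ i := fun i τ => by rw [hfsomeF]
  obtain ⟨g, hgdef⟩ : ∃ g : ℝ → ℝ,
      g = fun τ => Finset.univ.sup' Finset.univ_nonempty (fun o => f o τ) := ⟨_, rfl⟩
  have hg0 : ∀ τ, 0 ≤ g τ := by
    intro τ
    rw [hgdef]
    have := Finset.le_sup' (fun o => f o τ) (Finset.mem_univ (none : Option (Fin n)))
    rwa [hfnone] at this
  have hgge : ∀ τ (i : Fin n), - x τ i ≤ g τ := by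
    intro τ i
    rw [hgdef]
    have := Finset.le_sup' (fun o => f o τ) (Finset.mem_univ (some i))
    rwa [hfsome] at this
  -- continuity
  have hxc : ∀ i, ContinuousOn (fun τ => x τ i) (Icc 0 T) := by
    intro i τ hτ
    exact ((hx i τ hτ.1).continuousAt).continuousWithinAt
  have hgc : ContinuousOn g (Icc 0 T) := by
    rw [hgdef]
    apply ContinuousOn.finset_sup'_apply
    intro o _
    match o with
    | none => rw [hfnoneF]; exact continuousOn_const
    | some i => rw [hfsomeF]; exact (hxc i).neg
  -- maximum of g on [0, T]
  have hIccne : (Icc (0:ℝ) T).Nonempty := ⟨0, le_refl 0, hT⟩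
  obtain ⟨τm, hτm, hgmax⟩ := isCompact_Icc.exists_isMaxOn hIccne hgc
  obtain ⟨C, hCdef⟩ : ∃ C : ℝ, C = g τm := ⟨_, rfl⟩
  have hC0 : 0 ≤ C := hCdef ▸ hg0 τm
  have hCge : ∀ τ ∈ Icc (0:ℝ) T, g τ ≤ C := fun τ hτ => hCdef ▸ hgmax hτ
  -- the Gronwall constant
  obtain ⟨S, hSdef⟩ : ∃ S : ℝ, S = Finset.univ.sup' Finset.univ_nonempty
      (fun i => lam i * ∑ j, A i j) := ⟨_, rfl⟩
  have hS0 : 0 ≤ S := by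
    rw [hSdef]
    refine le_trans ?_ (Finset.le_sup' (fun i => lam i * ∑ j, A i j)
      (Finset.mem_univ (Classical.arbitrary (Fin n))))
    exact mul_nonneg (hlam _).le (Finset.sum_nonneg fun j _ => hA _ j)
  have hSge : ∀ i, lam i * ∑ j, A i j ≤ S := fun i =>
    hSdef ▸ Finset.le_sup' (fun i => lam i * ∑ j, A i j) (Finset.mem_univ i)
  obtain ⟨Kc, hKcdef⟩ : ∃ Kc : ℝ, Kc = 1 + (1 + C) * S := ⟨_, rfl⟩
  have hKcpos : 0 < Kc := by rw [hKcdef]; nlinarith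
  -- Dini estimate: at active indices the derivative is at most Kc * g τ
  have hdini : ∀ τ ∈ Ico (0:ℝ) T, ∀ r, Kc * g τ < r →
      ∃ᶠ z in 𝓝[>] τ, slope g τ z < r := by
    intro τ hτ r hrgt
    have hτ0 : (0:ℝ) ≤ τ := hτ.1
    have hτC : g τ ≤ C := hCge τ ⟨hτ.1, hτ.2.le⟩
    -- derivatives
    obtain ⟨d, hddef⟩ : ∃ d : Option (Fin n) → ℝ,
        d = fun o => o.elim 0 (fun i =>
          -(lam i * (1 - x τ i) * (∑ j, A i j * x τ j) - mu i * x τ i)) := ⟨_, rfl⟩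
    have hder : ∀ o, HasDerivAt (f o) (d o) τ := by
      intro o
      match o with
      | none =>
        rw [hddef, hfnoneF]
        exact hasDerivAt_const τ (0:ℝ)
      | some i =>
        have h := (hx i τ hτ0).neg
        rw [hddef, hfsomeF]
        exact h
    have hbound : ∀ o, f o τ = Finset.univ.sup' Finset.univ_nonempty (fun j => f j τ)
        → d o < r := by
      intro o hact
      have hfg : f o τ = g τ := by rw [hgdef]; exact hact
      have hKg0 : 0 ≤ Kc * g τ := mul_nonneg hKcpos.le (hg0 τ)
      match o with
      | none =>
        rw [hddef]
        simp only [Option.elim]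
        linarith
      | some i =>
        rw [hfsome] at hfg
        -- x τ i = - g τ
        have hxi : x τ i = - g τ := by linarith
        rw [hddef]
        simp only [Option.elim]
        -- show the derivative bound
        have h1 : mu i * x τ i ≤ 0 := by
          have := (hmu i).le
          rw [hxi]
          nlinarith [hg0 τ]
        have h2 : - (∑ j, A i j * x τ j) ≤ (∑ j, A i j) * g τ := by
          rw [← Finset.sum_neg_distrib, Finset.sum_mul]
          refine Finset.sum_le_sum fun j _ => ?_
          rw [← mul_neg]
          exact mul_le_mul_of_nonneg_left (hgge τ j) (hA i j)
        have h3 : 0 ≤ lam i * (1 - x τ i) := by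
          rw [hxi]
          have := (hlam i).le
          nlinarith [hg0 τ]
        have h4 : lam i * (1 - x τ i) * (- (∑ j, A i j * x τ j))
            ≤ lam i * (1 - x τ i) * ((∑ j, A i j) * g τ) :=
          mul_le_mul_of_nonneg_left h2 h3
        have h5 : lam i * (1 - x τ i) * ((∑ j, A i j) * g τ) ≤ Kc * g τ := by
          rw [hxi, hKcdef]
          have hAi : 0 ≤ ∑ j, A i j := Finset.sum_nonneg fun j _ => hA i j
          have hgτ := hg0 τ
          have hSgei := hSge i
          have hli := (hlam i).le
          nlinarith [mul_nonneg (sub_nonneg.2 hSgei) (mul_nonneg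
              (by linarith : (0:ℝ) ≤ 1 + g τ) hgτ),
            mul_nonneg (mul_nonneg (sub_nonneg.2 hτC) hS0) hgτ]
        -- d (some i) = mu i x - lam i (1-x) * sum ≤ ...
        have : -(lam i * (1 - x τ i) * (∑ j, A i j * x τ j) - mu i * x τ i) =
            mu i * x τ i + lam i * (1 - x τ i) * (- (∑ j, A i j * x τ j)) := by ring
        rw [this]
        linarith
    have := frequently_slope_sup'_lt f d τ hder r hbound
    rw [hgdef]
    exact this.frequently
  -- apply the fencing theorem for every δ > 0
  have hfence : ∀ δ : ℝ, 0 < δ → ∀ t ∈ Icc (0:ℝ) T, g t ≤ δ * Real.exp (2 * Kc * t) := by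
    intro δ hδ
    have hBderiv : ∀ t : ℝ, HasDerivAt (fun t => δ * Real.exp (2 * Kc * t))
        (2 * Kc * (δ * Real.exp (2 * Kc * t))) t := by
      intro t
      have h1 : HasDerivAt (fun t : ℝ => 2 * Kc * t) (2 * Kc) t := by
        simpa using (hasDerivAt_id t).const_mul (2 * Kc)
      have h2 := (Real.hasDerivAt_exp (2 * Kc * t)).comp t h1
      have h3 := h2.const_mul δ
      exact h3.congr_deriv (by ring)
    refine image_le_of_liminf_slope_right_lt_deriv_boundary hgc hdini ?_ hBderiv ?_
    · have : g 0 ≤ 0 := by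
        rw [hgdef]
        refine (Finset.sup'_le_iff _ _).2 fun o _ => ?_
        match o with
        | none => rw [hfnone]
        | some i => rw [hfsome]; linarith [h0 i]
      have : g 0 ≤ δ * Real.exp (2 * Kc * 0) := by
        simpa using this.trans (by positivity)
      exact this
    · intro t ht heq
      have hBpos : 0 < δ * Real.exp (2 * Kc * t) := by positivity
      rw [heq]
      nlinarith
  -- conclude g ≤ 0 on [0,T]
  intro i
  by_contra hcon
  push_neg at hcon
  have hgT : 0 < g T := lt_of_lt_of_le (by linarith : (0:ℝ) < - x T i) (hgge T i)
  obtain ⟨E, hEdef⟩ : ∃ E : ℝ, E = Real.exp (2 * Kc * T) := ⟨_, rfl⟩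
  have hEpos : 0 < E := hEdef ▸ Real.exp_pos _
  have := hfence (g T / (2 * E)) (by positivity) T ⟨hT, le_refl T⟩
  rw [← hEdef] at this
  have : g T ≤ g T / 2 := by
    rw [div_mul_eq_mul_div] at this
    calc g T ≤ g T * E / (2 * E) := this
      _ = g T / 2 := by field_simp
  linarith

lemma sis_le_one {n : ℕ} (hn : 0 < n) (A : Matrix (Fin n) (Fin n) ℝ)
    (hA : ∀ i j, 0 ≤ A i j) (lam mu : Fin n → ℝ)
    (hlam : ∀ i, 0 < lam i) (hmu : ∀ i, 0 < mu i)
    (x : ℝ → Fin n → ℝ)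
    (hx : ∀ (i : Fin n) (t : ℝ), 0 ≤ t →
      HasDerivAt (fun τ => x τ i)
        (lam i * (1 - x t i) * (∑ j, A i j * x t j) - mu i * x t i) t)
    (hnonneg : ∀ t, 0 ≤ t → ∀ i, 0 ≤ x t i)
    (h0 : ∀ i, x 0 i ≤ 1) :
    ∀ t, 0 ≤ t → ∀ i, x t i ≤ 1 := by
  haveI : Nonempty (Fin n) := ⟨⟨0, hn⟩⟩
  intro T hT
  obtain ⟨f, hfdef⟩ : ∃ f : Option (Fin n) → ℝ → ℝ,
      f = fun o => o.elim (fun _ => (0:ℝ)) (fun i τ => x τ i - 1) := ⟨_, rfl⟩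
  have hfnoneF : f none = fun _ => (0:ℝ) := by rw [hfdef]; rfl
  have hfsomeF : ∀ i, f (some i) = fun τ => x τ i - 1 := fun i => by rw [hfdef]; rfl
  have hfnone : ∀ τ, f none τ = 0 := fun τ => by rw [hfnoneF]
  have hfsome : ∀ i τ, f (some i) τ = x τ i - 1 := fun i τ => by rw [hfsomeF]
  obtain ⟨g, hgdef⟩ : ∃ g : ℝ → ℝ,
      g = fun τ => Finset.univ.sup' Finset.univ_nonempty (fun o => f o τ) := ⟨_, rfl⟩
  have hg0 : ∀ τ, 0 ≤ g τ := by
    intro τ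
    rw [hgdef]
    have := Finset.le_sup' (fun o => f o τ) (Finset.mem_univ (none : Option (Fin n)))
    rwa [hfnone] at this
  have hgge : ∀ τ (i : Fin n), x τ i - 1 ≤ g τ := by
    intro τ i
    rw [hgdef]
    have := Finset.le_sup' (fun o => f o τ) (Finset.mem_univ (some i))
    rwa [hfsome] at this
  have hxc : ∀ i, ContinuousOn (fun τ => x τ i) (Icc 0 T) := by
    intro i τ hτ
    exact ((hx i τ hτ.1).continuousAt).continuousWithinAt
  have hgc : ContinuousOn g (Icc 0 T) := by
    rw [hgdef]
    apply ContinuousOn.finset_sup'_apply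
    intro o _
    match o with
    | none => rw [hfnoneF]; exact continuousOn_const
    | some i => rw [hfsomeF]; exact (hxc i).sub continuousOn_const
  have hdini : ∀ τ ∈ Ico (0:ℝ) T, ∀ r, (0:ℝ) < r →
      ∃ᶠ z in 𝓝[>] τ, slope g τ z < r := by
    intro τ hτ r hrgt
    have hτ0 : (0:ℝ) ≤ τ := hτ.1
    obtain ⟨d, hddef⟩ : ∃ d : Option (Fin n) → ℝ,
        d = fun o => o.elim 0 (fun i =>
          lam i * (1 - x τ i) * (∑ j, A i j * x τ j) - mu i * x τ i) := ⟨_, rfl⟩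
    have hder : ∀ o, HasDerivAt (f o) (d o) τ := by
      intro o
      match o with
      | none =>
        rw [hddef, hfnoneF]
        exact hasDerivAt_const τ (0:ℝ)
      | some i =>
        have h := (hx i τ hτ0).sub_const 1
        rw [hddef, hfsomeF]
        exact h
    have hbound : ∀ o, f o τ = Finset.univ.sup' Finset.univ_nonempty (fun j => f j τ)
        → d o < r := by
      intro o hact
      have hfg : f o τ = g τ := by rw [hgdef]; exact hact
      match o with
      | none =>
        rw [hddef]
        simp only [Option.elim]
        linarith
      | some i =>
        rw [hfsome] at hfg
        have hxi : x τ i = 1 + g τ := by linarith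
        rw [hddef]
        simp only [Option.elim]
        have hsum : 0 ≤ ∑ j, A i j * x τ j :=
          Finset.sum_nonneg fun j _ => mul_nonneg (hA i j) (hnonneg τ hτ0 j)
        have h1 : lam i * (1 - x τ i) ≤ 0 := by
          rw [hxi]
          have := (hlam i).le
          nlinarith [hg0 τ]
        have h2 : lam i * (1 - x τ i) * (∑ j, A i j * x τ j) ≤ 0 :=
          mul_nonpos_of_nonpos_of_nonneg h1 hsum
        have h3 : 0 < mu i * x τ i := by
          rw [hxi]
          have := hmu i
          nlinarith [hg0 τ]
        linarith
    have := frequently_slope_sup'_lt f d τ hder r hbound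
    rw [hgdef]
    exact this.frequently
  have hfence : ∀ δ : ℝ, 0 < δ → ∀ t ∈ Icc (0:ℝ) T, g t ≤ δ * Real.exp t := by
    intro δ hδ
    have hBderiv : ∀ t : ℝ, HasDerivAt (fun t => δ * Real.exp t) (δ * Real.exp t) t :=
      fun t => (Real.hasDerivAt_exp t).const_mul δ
    refine image_le_of_liminf_slope_right_lt_deriv_boundary hgc
      (f' := fun _ => 0) hdini ?_ hBderiv ?_
    · have h1 : g 0 ≤ 0 := by
        rw [hgdef]
        refine (Finset.sup'_le_iff _ _).2 fun o _ => ?_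
        match o with
        | none => rw [hfnone]
        | some i => rw [hfsome]; linarith [h0 i]
      have h2 : (0:ℝ) ≤ δ * Real.exp 0 := by positivity
      calc g 0 ≤ 0 := h1
        _ ≤ δ * Real.exp 0 := h2
    · intro t ht _
      positivity
  intro i
  by_contra hcon
  push_neg at hcon
  have hgT : 0 < g T := lt_of_lt_of_le (by linarith : (0:ℝ) < x T i - 1) (hgge T i)
  obtain ⟨E, hEdef⟩ : ∃ E : ℝ, E = Real.exp T := ⟨_, rfl⟩
  have hEpos : 0 < E := hEdef ▸ Real.exp_pos _
  have h5 := hfence (g T / (2 * E)) (by positivity) T ⟨hT, le_refl T⟩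
  rw [← hEdef] at h5
  have h6 : g T ≤ g T / 2 := by
    rw [div_mul_eq_mul_div] at h5
    calc g T ≤ g T * E / (2 * E) := h5
      _ = g T / 2 := by field_simp
  linarith

lemma sis_decay {n : ℕ} (hn : 0 < n) (A : Matrix (Fin n) (Fin n) ℝ)
    (hA : ∀ i j, 0 ≤ A i j) (lam mu : Fin n → ℝ)
    (hlam : ∀ i, 0 < lam i) (hmu : ∀ i, 0 < mu i)
    (x : ℝ → Fin n → ℝ)
    (hx : ∀ (i : Fin n) (t : ℝ), 0 ≤ t →
      HasDerivAt (fun τ => x τ i)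
        (lam i * (1 - x t i) * (∑ j, A i j * x t j) - mu i * x t i) t)
    (hlo : ∀ t, 0 ≤ t → ∀ i, 0 ≤ x t i)
    (hhi : ∀ t, 0 ≤ t → ∀ i, x t i ≤ 1)
    (v : Fin n → ℝ) (hv : ∀ i, 0 < v i) (ρ : ℝ) (hρ : ρ ≤ 0)
    (heig : (Matrix.diagonal lam * A - Matrix.diagonal mu).mulVec v = ρ • v) :
    ∀ i, Tendsto (fun t => x t i) atTop (nhds 0) := by
  haveI : Nonempty (Fin n) := ⟨⟨0, hn⟩⟩
  -- scalar form of the eigen equation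
  have heigi : ∀ i, lam i * (∑ j, A i j * v j) = (mu i + ρ) * v i := by
    intro i
    have h1 := congrFun heig i
    rw [Matrix.sub_mulVec] at h1
    have h2 : (Matrix.diagonal mu).mulVec v i = mu i * v i := by
      rw [Matrix.mulVec_diagonal]
    have h3 : (Matrix.diagonal lam * A).mulVec v i = lam i * ∑ j, A i j * v j := by
      rw [← Matrix.mulVec_mulVec, Matrix.mulVec_diagonal]
      congr 1
    simp only [Pi.sub_apply, Pi.smul_apply, smul_eq_mul] at h1
    rw [h2, h3] at h1
    linarith
  -- the max function
  obtain ⟨m, hmdef⟩ : ∃ m : ℝ → ℝ,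
      m = fun τ => Finset.univ.sup' Finset.univ_nonempty (fun i => x τ i / v i) := ⟨_, rfl⟩
  have hmge : ∀ τ (j : Fin n), x τ j / v j ≤ m τ := fun τ j =>
    hmdef ▸ Finset.le_sup' (fun i => x τ i / v i) (Finset.mem_univ j)
  have hm0 : ∀ τ, 0 ≤ τ → 0 ≤ m τ := by
    intro τ hτ
    refine le_trans ?_ (hmge τ (Classical.arbitrary _))
    exact div_nonneg (hlo τ hτ _) (hv _).le
  have hxle : ∀ τ, ∀ j, x τ j ≤ m τ * v j := by
    intro τ j
    have := hmge τ j
    rw [div_le_iff₀ (hv j)] at this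
    linarith [this]
  have hmc : ∀ a b : ℝ, 0 ≤ a → ContinuousOn m (Icc a b) := by
    intro a b ha
    rw [hmdef]
    apply ContinuousOn.finset_sup'_apply
    intro i _
    intro τ hτ
    exact (((hx i τ (le_trans ha hτ.1)).continuousAt).continuousWithinAt).div_const _
  -- the decay constant
  obtain ⟨c, hcdef⟩ : ∃ c : ℝ, c = Finset.univ.inf' Finset.univ_nonempty
      (fun i => mu i * v i) := ⟨_, rfl⟩
  have hcpos : 0 < c := by
    rw [hcdef]
    exact (Finset.lt_inf'_iff _).2 fun i _ => mul_pos (hmu i) (hv i)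
  have hcle : ∀ i, c ≤ mu i * v i := fun i =>
    hcdef ▸ Finset.inf'_le _ (Finset.mem_univ i)
  -- key Dini estimate
  have hkey : ∀ τ, 0 ≤ τ → ∀ r, -c * m τ ^ 2 < r →
      ∃ᶠ z in 𝓝[>] τ, slope m τ z < r := by
    intro τ hτ0 r hr
    obtain ⟨d, hddef⟩ : ∃ d : Fin n → ℝ,
        d = fun i => (lam i * (1 - x τ i) * (∑ j, A i j * x τ j) - mu i * x τ i) / v i :=
      ⟨_, rfl⟩
    have hder : ∀ i, HasDerivAt (fun τ => x τ i / v i) (d i) τ := by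
      intro i
      rw [hddef]
      exact (hx i τ hτ0).div_const _
    have hbound : ∀ i, x τ i / v i = Finset.univ.sup' Finset.univ_nonempty
        (fun j => x τ j / v j) → d i < r := by
      intro i hact
      have hacti : x τ i / v i = m τ := by rw [hmdef]; exact hact
      have hvi := hv i
      have hxv : x τ i = m τ * v i := by
        rw [div_eq_iff (ne_of_gt hvi)] at hacti
        linarith [hacti]
      have hm0τ := hm0 τ hτ0
      have hx01l := hlo τ hτ0 i
      have hx01h := hhi τ hτ0 i
      -- derivative estimate
      have hAx : (∑ j, A i j * x τ j) ≤ m τ * ∑ j, A i j * v j := by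
        rw [Finset.mul_sum]
        refine Finset.sum_le_sum fun j _ => ?_
        have := hxle τ j
        calc A i j * x τ j ≤ A i j * (m τ * v j) :=
              mul_le_mul_of_nonneg_left this (hA i j)
          _ = m τ * (A i j * v j) := by ring
      have hlam1x : 0 ≤ lam i * (1 - x τ i) := by
        have := (hlam i).le
        nlinarith
      have hF1 : lam i * (1 - x τ i) * (∑ j, A i j * x τ j)
          ≤ lam i * (1 - x τ i) * (m τ * ∑ j, A i j * v j) :=
        mul_le_mul_of_nonneg_left hAx hlam1x
      have hF2 : lam i * (1 - x τ i) * (m τ * ∑ j, A i j * v j)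
          = (1 - x τ i) * m τ * ((mu i + ρ) * v i) := by
        have := heigi i
        calc lam i * (1 - x τ i) * (m τ * ∑ j, A i j * v j)
            = (1 - x τ i) * m τ * (lam i * ∑ j, A i j * v j) := by ring
          _ = (1 - x τ i) * m τ * ((mu i + ρ) * v i) := by rw [this]
      have hF3 : (1 - x τ i) * ρ ≤ 0 :=
        mul_nonpos_of_nonneg_of_nonpos (by linarith) hρ
      -- (1 - x)(mu + ρ) ≤ (1 - x) mu
      have hF4 : (1 - x τ i) * (mu i + ρ) ≤ (1 - x τ i) * mu i := by nlinarith
      have hF5 : (1 - x τ i) * m τ * ((mu i + ρ) * v i)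
          ≤ m τ * v i * ((1 - x τ i) * mu i) := by
        have h1 : 0 ≤ m τ * v i := mul_nonneg hm0τ hvi.le
        calc (1 - x τ i) * m τ * ((mu i + ρ) * v i)
            = (m τ * v i) * ((1 - x τ i) * (mu i + ρ)) := by ring
          _ ≤ (m τ * v i) * ((1 - x τ i) * mu i) :=
            mul_le_mul_of_nonneg_left hF4 h1
      -- so the numerator is ≤ -mu_i m^2 v_i^2
      have hnum : lam i * (1 - x τ i) * (∑ j, A i j * x τ j) - mu i * x τ i
          ≤ -(mu i * m τ ^ 2 * v i ^ 2) := by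
        have h6 : m τ * v i * ((1 - x τ i) * mu i) - mu i * x τ i
            = -(mu i * m τ ^ 2 * v i ^ 2) := by
          rw [hxv]; ring
        calc lam i * (1 - x τ i) * (∑ j, A i j * x τ j) - mu i * x τ i
            ≤ (1 - x τ i) * m τ * ((mu i + ρ) * v i) - mu i * x τ i := by
              rw [← hF2]; linarith
          _ ≤ m τ * v i * ((1 - x τ i) * mu i) - mu i * x τ i := by linarith
          _ = -(mu i * m τ ^ 2 * v i ^ 2) := h6
      have hdle : d i ≤ -c * m τ ^ 2 := by
        rw [hddef]
        rw [div_le_iff₀ hvi]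
        have h7 : -(mu i * m τ ^ 2 * v i ^ 2) ≤ -c * m τ ^ 2 * v i := by
          have h8 : c * m τ ^ 2 ≤ mu i * v i * m τ ^ 2 :=
            mul_le_mul_of_nonneg_right (hcle i) (sq_nonneg _)
          nlinarith [sq_nonneg (m τ), hvi]
        linarith
      linarith
    have := frequently_slope_sup'_lt (fun i τ => x τ i / v i) d τ hder r hbound
    rw [hmdef]
    exact this.frequently
  -- monotonicity of m
  have hmono : ∀ a b : ℝ, 0 ≤ a → a ≤ b → m b ≤ m a := by
    intro a b ha hab
    have := image_le_of_liminf_slope_right_le_deriv_boundary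
      (f := m) (a := a) (b := b) (B := fun _ => m a) (B' := fun _ => 0)
      (hmc a b ha) (le_refl _) continuousOn_const
      (fun τ _ => hasDerivWithinAt_const τ _ _)
      (fun τ hτ r hr => by
        have hr' : (0:ℝ) < r := hr
        refine hkey τ (le_trans ha hτ.1) r (lt_of_le_of_lt ?_ hr')
        nlinarith [sq_nonneg (m τ)])
    exact this ⟨hab, le_refl b⟩
  -- m gets below any ε
  have hsmall : ∀ ε : ℝ, 0 < ε → ∃ T : ℝ, 0 ≤ T ∧ m T ≤ ε := by
    intro ε hε
    by_contra hcon
    push_neg at hcon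
    have hgt : ∀ τ, 0 ≤ τ → ε < m τ := fun τ hτ => hcon τ hτ
    obtain ⟨Tb, hTbdef⟩ : ∃ Tb : ℝ, Tb = (m 0 + 1) / (c * ε ^ 2) := ⟨_, rfl⟩
    have hcε : 0 < c * ε ^ 2 := by positivity
    have hm00 : 0 ≤ m 0 := hm0 0 le_rfl
    have hTbpos : 0 < Tb := by rw [hTbdef]; positivity
    have hfence := image_le_of_liminf_slope_right_le_deriv_boundary
      (f := m) (a := 0) (b := Tb) (B := fun t => m 0 - c * ε ^ 2 * t)
      (B' := fun _ => -(c * ε ^ 2))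
      (hmc 0 Tb le_rfl) (by simp) (by fun_prop)
      (fun τ _ => ((hasDerivWithinAt_const τ _ (m 0)).sub
        (((hasDerivWithinAt_id τ _).const_mul (c * ε ^ 2)))).congr_deriv (by ring))
      (fun τ hτ r hr => by
        have hr' : -(c * ε ^ 2) < r := hr
        refine hkey τ hτ.1 r (lt_of_le_of_lt ?_ hr')
        have h1 : ε < m τ := hgt τ hτ.1
        have h2 : ε ^ 2 ≤ m τ ^ 2 := by nlinarith
        nlinarith)
    have h2 := hfence ⟨hTbpos.le, le_refl Tb⟩
    have h3 : c * ε ^ 2 * Tb = m 0 + 1 := by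
      rw [hTbdef]
      field_simp
    have h4 := hgt Tb hTbpos.le
    rw [h3] at h2
    linarith
  -- m tends to 0
  have hmtend : Tendsto m atTop (𝓝 0) := by
    refine Metric.tendsto_atTop.2 fun ε hε => ?_
    obtain ⟨T, hT0, hmT⟩ := hsmall (ε / 2) (by linarith)
    refine ⟨T, fun t ht => ?_⟩
    have h1 : m t ≤ ε / 2 := le_trans (hmono T t hT0 ht) hmT
    have h2 : 0 ≤ m t := hm0 t (le_trans hT0 ht)
    rw [Real.dist_eq]
    rw [abs_of_nonneg (by linarith : (0:ℝ) ≤ m t - 0)]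
    linarith
  -- conclude
  intro i
  have hupper : Tendsto (fun t => m t * v i) atTop (𝓝 0) := by
    have := hmtend.mul_const (v i)
    simpa using this
  refine tendsto_of_tendsto_of_tendsto_of_le_of_le' tendsto_const_nhds hupper ?_ ?_
  · filter_upwards [eventually_ge_atTop (0:ℝ)] with t ht
    exact hlo t ht i
  · filter_upwards [eventually_ge_atTop (0:ℝ)] with t ht
    exact hxle t i

/-- If every eigenvalue of `ΛA − M` has nonpositive real part, the disease-free
equilibrium of the heterogeneous network SIS model is globally asymptotically
stable on `[0,1]^n`. Eigenvalues of the real matrix `ΛA − M` are the complex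
roots of its characteristic polynomial. -/
theorem network_sis_heterogeneous_below_threshold (n : ℕ) (hn : 1 ≤ n)
    (A : Matrix (Fin n) (Fin n) ℝ) (hA : ∀ i j, 0 ≤ A i j)
    (hirr : MatrixIrreducible A)
    (lam mu : Fin n → ℝ) (hlam : ∀ i, 0 < lam i) (hmu : ∀ i, 0 < mu i)
    (heig : ∀ c : ℂ,
      (((Matrix.diagonal lam * A - Matrix.diagonal mu).map
        (algebraMap ℝ ℂ)).charpoly).IsRoot c → c.re ≤ 0)
    (x : ℝ → Fin n → ℝ)
    (hx : ∀ (i : Fin n) (t : ℝ), 0 ≤ t →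
      HasDerivAt (fun τ => x τ i)
        (lam i * (1 - x t i) * (∑ j, A i j * x t j) - mu i * x t i) t)
    (h0 : ∀ i, x 0 i ∈ Set.Icc (0 : ℝ) 1) :
    ∀ i, Tendsto (fun t => x t i) atTop (nhds 0) := by
  have hn0 : 0 < n := hn
  obtain ⟨ρ, v, hvpos, heigv⟩ := exists_perron_eig hn0 A hA hirr lam mu hlam hmu
  have hvne : v ≠ 0 := by
    intro h
    have h1 := hvpos ⟨0, hn0⟩
    rw [h] at h1
    simp at h1
  have hroot := charpoly_root_of_eig _ v hvne ρ heigv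
  have hρle : ρ ≤ 0 := by
    have := heig (ρ : ℂ) hroot
    simpa using this
  have hlo := sis_nonneg hn0 A hA lam mu hlam hmu x hx (fun i => (h0 i).1)
  have hhi := sis_le_one hn0 A hA lam mu hlam hmu x hx hlo (fun i => (h0 i).2)
  exact sis_decay hn0 A hA lam mu hlam hmu x hx hlo hhi v hvpos ρ hρle heigv
end

section
/- Let n ≥ 1, let A ∈ ℝ^{n×n} be a matrix with nonnegative entries, and let λ_i ∈ [0,1] and μ_i ∈ [0,1] for each i. Define the discrete-time network SIS map by x_i(t+1) = (1 − μ_i)x_i(t) + (1 − x_i(t))·(1 − (1 − λ_i)^{m_i(t)}), where m_i(t) = Σ_j a_{ij}x_j(t). If x(0) ∈ [0,1]^n, then x(t) ∈ [0,1]^n for all t ∈ ℕ (the hypercube [0,1]^n is positively invariant for the discrete-time network SIS dynamics). -/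
open Filter Topology

/-- Positive invariance of the hypercube `[0,1]^n` for the discrete-time
network SIS dynamics
`x_i(t+1) = (1 − μ_i)x_i(t) + (1 − x_i(t))(1 − (1 − λ_i)^{m_i(t)})`,
with `m_i(t) = Σ_j a_{ij}x_j(t)` and real exponentiation. -/
theorem discrete_network_sis_invariance (n : ℕ) (hn : 1 ≤ n)
    (A : Matrix (Fin n) (Fin n) ℝ) (hA : ∀ i j, 0 ≤ A i j)
    (lam mu : Fin n → ℝ)
    (hlam : ∀ i, lam i ∈ Set.Icc (0 : ℝ) 1)
    (hmu : ∀ i, mu i ∈ Set.Icc (0 : ℝ) 1)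
    (x : ℕ → Fin n → ℝ)
    (hx : ∀ (t : ℕ) (i : Fin n),
      x (t + 1) i = (1 - mu i) * x t i +
        (1 - x t i) * (1 - Real.rpow (1 - lam i) (∑ j, A i j * x t j)))
    (h0 : ∀ i, x 0 i ∈ Set.Icc (0 : ℝ) 1) :
    ∀ (t : ℕ) (i : Fin n), x t i ∈ Set.Icc (0 : ℝ) 1 := by
  intro t
  induction t with
  | zero => exact h0
  | succ t ih =>
    intro i
    obtain ⟨hxl, hxu⟩ := ih i
    obtain ⟨hll, hlu⟩ := hlam i
    obtain ⟨hml, hmu'⟩ := hmu i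
    have hm : 0 ≤ ∑ j, A i j * x t j :=
      Finset.sum_nonneg fun j _ => mul_nonneg (hA i j) (ih j).1
    have hb0 : (0:ℝ) ≤ 1 - lam i := by linarith
    have hb1 : 1 - lam i ≤ 1 := by linarith
    have hp0 : 0 ≤ Real.rpow (1 - lam i) (∑ j, A i j * x t j) :=
      Real.rpow_nonneg hb0 _
    have hp1 : Real.rpow (1 - lam i) (∑ j, A i j * x t j) ≤ 1 :=
      Real.rpow_le_one hb0 hb1 hm
    rw [hx t i]
    constructor
    · have h1 : 0 ≤ (1 - mu i) * x t i := mul_nonneg (by linarith) hxl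
      have h2 : 0 ≤ (1 - x t i) * (1 - Real.rpow (1 - lam i) (∑ j, A i j * x t j)) :=
        mul_nonneg (by linarith) (by linarith)
      linarith
    · have h1 : (1 - mu i) * x t i ≤ x t i :=
        mul_le_of_le_one_left hxl (by linarith)
      have h2 : (1 - x t i) * (1 - Real.rpow (1 - lam i) (∑ j, A i j * x t j)) ≤ 1 - x t i :=
        mul_le_of_le_one_right (by linarith) (by linarith)
      linarith
end
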